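/- arXiv:1001.3164 — 8 statements merged into one kernel-verified Lean document; each statement's English description precedes it below -/
import Mathlib

section
/- Let $V$ be a finite-dimensional complex vector space and let $G \le GL(V)$ be a finite subgroup generated by a set of reflections of order 2 (involutions whose fixed-point subspace is a hyperplane). Then the invariants of $G$ acting on the exterior algebra satisfy $(\Lambda V)^{G} = \Lambda (V^{G})$, where $V^{G} = \{v \in V : g v = v \text{ for all } g \in G\}$ and $\Lambda(V^G)$ denotes the image of the exterior algebra of $V^G$ under the map induced by the inclusion $V^G \hookrightarrow V$. -/
/-!
An element `x` of `Λ V` lies in `Λ W` iff every functional vanishing on `W` contracts `x` to zero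
(grow `W` one vector `u` at a time and write `x = x₀ + u ∧ x₁` over `W`). In finite dimension this
reads `Wₓ ≤ W`, where `Wₓ` is the common zero set of the functionals contracting `x` to zero, so
`Λ (⋂ Wᵢ) = ⋂ Λ Wᵢ`. As `V^G` is the
intersection of the fixed hyperplanes `H_s` of the generating reflections, it remains to see that an
`s`-invariant `x` lies in `Λ H_s`: with `V = H_s ⊕ ℂ a` and `s a = -a`, write `x = x₀ + a ∧ x₁` with
`x₀, x₁ ∈ Λ H_s`; then `s x = x₀ - a ∧ x₁`, so `a ∧ x₁ = 0`.
-/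

open ExteriorAlgebra Module
open CliffordAlgebra (contractLeft contractLeft_ι_mul contractLeft_one)

local notation "Λ[" W "]" => AlgHom.range (ExteriorAlgebra.map (Submodule.subtype W))

theorem eq_zero_of_neg_eq_self (K : Type*) {V : Type*} [Field K] [NeZero (2 : K)] [AddCommGroup V]
    [Module K V] {v : V} (h : -v = v) : v = 0 := by
  have htwo : (2 : K) • v = 0 := by
    rw [two_smul]
    nth_rw 1 [← h]
    exact neg_add_cancel v
  exact (smul_eq_zero.mp htwo).resolve_left two_ne_zero

theorem Subgroup.forall_mem_closure_smul_eq_iff {G α : Type*} [Group G] [MulAction G α]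
    {S : Set G} {a : α} : (∀ g ∈ closure S, g • a = a) ↔ ∀ s ∈ S, s • a = a :=
  ⟨fun h s hs => h s (subset_closure hs),
    fun h _ hg => (closure_le (MulAction.stabilizer G a)).mpr h hg⟩

namespace ExteriorAlgebra

section CommRing

variable {R M : Type*} [CommRing R] [AddCommGroup M] [Module R M]

theorem ι_mem_range_map_subtype {W : Submodule R M} {w : M} (hw : w ∈ W) : ι R w ∈ Λ[W] :=
  ⟨ι R ⟨w, hw⟩, map_apply_ι _ _⟩

theorem mem_range_map_subtype_top (x : ExteriorAlgebra R M) : x ∈ Λ[(⊤ : Submodule R M)] :=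
  map_surjective_iff.mpr (fun v => ⟨⟨v, trivial⟩, rfl⟩) x

theorem mul_mem_of_forall_ι_mul_mem {W : Submodule R M} {N : Submodule R (ExteriorAlgebra R M)}
    (hN : ∀ w ∈ W, ∀ y ∈ N, ι R w * y ∈ N) {x y : ExteriorAlgebra R M} (hx : x ∈ Λ[W])
    (hy : y ∈ N) : x * y ∈ N := by
  obtain ⟨x, rfl⟩ := hx
  induction x using ExteriorAlgebra.induction generalizing y with
  | algebraMap r => simpa [Algebra.algebraMap_eq_smul_one] using N.smul_mem r hy
  | ι w => simpa using hN w w.2 y hy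
  | mul a b ha hb => rw [map_mul, mul_assoc]; exact ha (hb hy)
  | add a b ha hb => rw [map_add, add_mul]; exact add_mem (ha hy) (hb hy)

theorem contractLeft_eq_zero_of_mem_range_map_subtype {W : Submodule R M} {f : Dual R M}
    (hf : f ∈ W.dualAnnihilator) {x : ExteriorAlgebra R M} (hx : x ∈ Λ[W]) :
    contractLeft f x = 0 := by
  have hι : ∀ w ∈ W, ∀ y ∈ LinearMap.ker (contractLeft f),
      ι R w * y ∈ LinearMap.ker (contractLeft f) := by
    intro w hw y hy
    rw [LinearMap.mem_ker] at hy ⊢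
    rw [contractLeft_ι_mul, hy, (Submodule.mem_dualAnnihilator f).mp hf w hw, zero_smul, mul_zero,
      sub_zero]
  simpa using mul_mem_of_forall_ι_mul_mem hι hx (contractLeft_one (Q := 0) f)

theorem exists_eq_add_ι_mul_of_mem_range_map_subtype_sup_span {W : Submodule R M} {u : M}
    {x : ExteriorAlgebra R M} (hx : x ∈ Λ[W ⊔ R ∙ u]) :
    ∃ x₀ ∈ Λ[W], ∃ x₁ ∈ Λ[W], x = x₀ + ι R u * x₁ := by
  let N := Subalgebra.toSubmodule Λ[W] ⊔
    (Subalgebra.toSubmodule Λ[W]).map (LinearMap.mulLeft R (ι R u))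
  have mem_N : ∀ y, y ∈ N ↔ ∃ x₀ ∈ Λ[W], ∃ x₁ ∈ Λ[W], y = x₀ + ι R u * x₁ := by
    intro y
    simp only [N, Submodule.mem_sup, Submodule.mem_map, Subalgebra.mem_toSubmodule,
      LinearMap.mulLeft_apply]
    constructor
    · rintro ⟨x₀, h₀, _, ⟨x₁, h₁, rfl⟩, rfl⟩
      exact ⟨x₀, h₀, x₁, h₁, rfl⟩
    · rintro ⟨x₀, h₀, x₁, h₁, rfl⟩
      exact ⟨x₀, h₀, _, ⟨x₁, h₁, rfl⟩, rfl⟩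
  have hι : ∀ w ∈ W ⊔ R ∙ u, ∀ y ∈ N, ι R w * y ∈ N := by
    rintro w hw y hy
    obtain ⟨w', hw', _, hc, rfl⟩ := Submodule.mem_sup.mp hw
    obtain ⟨c, rfl⟩ := Submodule.mem_span_singleton.mp hc
    obtain ⟨x₀, h₀, x₁, h₁, rfl⟩ := (mem_N y).mp hy
    have hιw' := ι_mem_range_map_subtype hw'
    refine (mem_N _).mpr ⟨ι R w' * x₀, mul_mem hιw' h₀, c • x₀ - ι R w' * x₁,
      sub_mem (Subalgebra.smul_mem _ h₀ c) (mul_mem hιw' h₁), ?_⟩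
    have hswap : ι R w' * (ι R u * x₁) = -(ι R u * (ι R w' * x₁)) := by
      rw [← mul_assoc, ← mul_assoc, eq_neg_iff_add_eq_zero, ← add_mul, ι_add_mul_swap, zero_mul]
    have hsq : ι R u * (ι R u * x₁) = 0 := by rw [← mul_assoc, ι_sq_zero, zero_mul]
    simp only [map_add, map_smul, add_mul, mul_add, smul_mul_assoc, hswap, hsq, smul_zero,
      add_zero, mul_sub, mul_smul_comm]
    abel
  exact (mem_N x).mp (by simpa using mul_mem_of_forall_ι_mul_mem hι hx ((mem_N 1).mpr
    ⟨1, one_mem _, 0, zero_mem _, by rw [mul_zero, add_zero]⟩))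

theorem map_apply_eq_self_of_mem_range_map_subtype {W : Submodule R M} {g : M →ₗ[R] M}
    (hg : ∀ w ∈ W, g w = w) {x : ExteriorAlgebra R M} (hx : x ∈ Λ[W]) : map g x = x := by
  obtain ⟨y, rfl⟩ := hx
  have h : (map g).comp (map W.subtype) = map W.subtype := by
    rw [map_comp_map]
    congr 1
    ext w
    exact hg w w.2
  exact DFunLike.congr_fun h y

end CommRing

section Field

variable {K V : Type*} [Field K] [AddCommGroup V] [Module K V] [FiniteDimensional K V]

theorem mem_range_map_subtype_of_forall_contractLeft_eq_zero {W : Submodule K V}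
    {x : ExteriorAlgebra K V} (h : ∀ f ∈ W.dualAnnihilator, contractLeft f x = 0) :
    x ∈ Λ[W] := by
  induction W using WellFoundedGT.induction with
  | _ W ih =>
  by_cases htop : W = ⊤
  · subst htop
    exact mem_range_map_subtype_top x
  obtain ⟨u, hu⟩ : ∃ u, u ∉ W := by
    by_contra! hW
    exact htop (Submodule.eq_top_iff'.mpr hW)
  have hlt : W < W ⊔ K ∙ u :=
    left_lt_sup.mpr fun hle => hu (hle (Submodule.mem_span_singleton_self u))
  obtain ⟨x₀, h₀, x₁, h₁, rfl⟩ := exists_eq_add_ι_mul_of_mem_range_map_subtype_sup_span <|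
    ih _ hlt fun f hf => h f (Submodule.dualAnnihilator_anti le_sup_left hf)
  obtain ⟨f, hf, hfu⟩ : ∃ f ∈ W.dualAnnihilator, f u ≠ 0 := by
    rw [← Subspace.dualAnnihilator_dualCoannihilator_eq (W := W),
      Submodule.mem_dualCoannihilator] at hu
    push Not at hu
    exact hu
  have hcontract : contractLeft f (x₀ + ι K u * x₁) = f u • x₁ := by
    rw [map_add, contractLeft_eq_zero_of_mem_range_map_subtype hf h₀, contractLeft_ι_mul,
      contractLeft_eq_zero_of_mem_range_map_subtype hf h₁, mul_zero, sub_zero, zero_add]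
  rw [h f hf, eq_comm, smul_eq_zero] at hcontract
  rw [hcontract.resolve_left hfu, mul_zero, add_zero]
  exact h₀

theorem mem_range_map_subtype_iff_dualCoannihilator_le {W : Submodule K V}
    {x : ExteriorAlgebra K V} :
    x ∈ Λ[W] ↔
      (LinearMap.ker ((contractLeft (R := K) (M := V) (Q := 0)).flip x)).dualCoannihilator ≤ W := by
  constructor
  · intro hx
    rw [← Subspace.dualAnnihilator_dualCoannihilator_eq (W := W)]
    exact Submodule.dualCoannihilator_anti fun f hf =>
      contractLeft_eq_zero_of_mem_range_map_subtype hf hx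
  · intro hle
    refine mem_range_map_subtype_of_forall_contractLeft_eq_zero fun f hf => ?_
    have := Submodule.dualAnnihilator_anti hle hf
    rwa [Subspace.dualCoannihilator_dualAnnihilator_eq] at this

theorem mem_range_map_subtype_iInf_iff {ι : Sort*} {W : ι → Submodule K V}
    {x : ExteriorAlgebra K V} : x ∈ Λ[⨅ i, W i] ↔ ∀ i, x ∈ Λ[W i] := by
  simp only [mem_range_map_subtype_iff_dualCoannihilator_le, le_iInf_iff]

theorem mem_range_map_ker_sub_id_of_map_eq_self [NeZero (2 : K)] {s : V ≃ₗ[K] V}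
    (hs : s * s = 1)
    (hH : finrank K (LinearMap.ker (s.toLinearMap - LinearMap.id)) + 1 = finrank K V)
    {x : ExteriorAlgebra K V} (hx : map s.toLinearMap x = x) :
    x ∈ Λ[LinearMap.ker (s.toLinearMap - LinearMap.id)] := by
  set H := LinearMap.ker (s.toLinearMap - LinearMap.id)
  have mem_H : ∀ v, v ∈ H ↔ s v = v := by simp [H, sub_eq_zero]
  obtain ⟨v, hv⟩ : ∃ v, v ∉ H := by
    by_contra! hH'
    rw [Submodule.eq_top_iff'.mpr hH', finrank_top] at hH
    omega
  set a := v - s v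
  have hsa : s a = -a := by
    have hssv : s (s v) = v := by simpa using congr($hs v)
    simp [a, hssv]
  have ha : a ∉ H := fun haH => by
    rw [mem_H, hsa] at haH
    exact hv ((mem_H v).mpr (sub_eq_zero.mp (eq_zero_of_neg_eq_self K haH)).symm)
  have htop : H ⊔ K ∙ a = ⊤ := by
    have hlt : H < H ⊔ K ∙ a :=
      left_lt_sup.mpr fun hle => ha (hle (Submodule.mem_span_singleton_self a))
    have hH_lt := Submodule.finrank_lt_finrank_of_lt hlt
    have hle_V := Submodule.finrank_le (H ⊔ K ∙ a)
    exact Submodule.eq_top_of_finrank_eq (by omega)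
  obtain ⟨x₀, h₀, x₁, h₁, rfl⟩ := exists_eq_add_ι_mul_of_mem_range_map_subtype_sup_span
    (htop ▸ mem_range_map_subtype_top x)
  have hfix : ∀ w ∈ H, s.toLinearMap w = w := fun w hw => (mem_H w).mp hw
  rw [map_add, map_mul, map_apply_eq_self_of_mem_range_map_subtype hfix h₀,
    map_apply_eq_self_of_mem_range_map_subtype hfix h₁, map_apply_ι, LinearEquiv.coe_coe, hsa,
    map_neg, neg_mul, add_right_inj] at hx
  rw [eq_zero_of_neg_eq_self K hx, add_zero]
  exact h₀

end Field

end ExteriorAlgebra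

theorem exteriorAlgebra_invariants_of_reflection_group_general
    {V : Type*} [AddCommGroup V] [Module ℂ V] [FiniteDimensional ℂ V]
    (G : Subgroup (V ≃ₗ[ℂ] V))
    (S : Set (V ≃ₗ[ℂ] V)) (hgen : Subgroup.closure S = G)
    (hrefl : ∀ s ∈ S, s ≠ 1 ∧ s * s = 1 ∧
      Module.finrank ℂ (LinearMap.ker (s.toLinearMap - LinearMap.id)) + 1 =
        Module.finrank ℂ V)
    (VG : Submodule ℂ V) (hVG : ∀ v : V, v ∈ VG ↔ ∀ g ∈ G, g v = v) :
    ∀ x : ExteriorAlgebra ℂ V,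
      (∀ g ∈ G, ExteriorAlgebra.map ((g : V ≃ₗ[ℂ] V).toLinearMap) x = x) ↔
        x ∈ (ExteriorAlgebra.map (VG.subtype)).range := by
  have hVG_eq : VG = ⨅ s ∈ S, LinearMap.ker (s.toLinearMap - LinearMap.id) := by
    ext v
    simp only [hVG, ← hgen, Submodule.mem_iInf, LinearMap.mem_ker, LinearMap.sub_apply,
      LinearMap.id_apply, sub_eq_zero, LinearEquiv.coe_coe]
    exact Subgroup.forall_mem_closure_smul_eq_iff
  intro x
  constructor
  · intro hx
    rw [hVG_eq]
    simp only [mem_range_map_subtype_iInf_iff]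
    intro s hs
    obtain ⟨-, hs_inv, hs_codim⟩ := hrefl s hs
    exact mem_range_map_ker_sub_id_of_map_eq_self hs_inv hs_codim
      (hx s (hgen ▸ Subgroup.subset_closure hs))
  · intro hx g hg
    exact map_apply_eq_self_of_mem_range_map_subtype (fun w hw => (hVG w).mp hw g hg) hx

/-- If a finite subgroup `G` of `GL(V)` is generated by reflections of
order 2, then the `G`-invariants of the exterior algebra `Λ V` equal the image of
`Λ (V^G)` under the map induced by the inclusion `V^G ↪ V`. -/
theorem exteriorAlgebra_invariants_of_reflection_group
    {V : Type*} [AddCommGroup V] [Module ℂ V] [FiniteDimensional ℂ V]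
    (G : Subgroup (V ≃ₗ[ℂ] V)) (hfin : (G : Set (V ≃ₗ[ℂ] V)).Finite)
    (S : Set (V ≃ₗ[ℂ] V)) (hgen : Subgroup.closure S = G)
    (hrefl : ∀ s ∈ S, s ≠ 1 ∧ s * s = 1 ∧
      Module.finrank ℂ (LinearMap.ker (s.toLinearMap - LinearMap.id)) + 1 =
        Module.finrank ℂ V)
    (VG : Submodule ℂ V) (hVG : ∀ v : V, v ∈ VG ↔ ∀ g ∈ G, g v = v) :
    ∀ x : ExteriorAlgebra ℂ V,
      (∀ g ∈ G, ExteriorAlgebra.map ((g : V ≃ₗ[ℂ] V).toLinearMap) x = x) ↔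
        x ∈ (ExteriorAlgebra.map (VG.subtype)).range :=
  exteriorAlgebra_invariants_of_reflection_group_general G S hgen hrefl VG hVG
end

section
/- Let $k$ be a field, let $U$ be a $k$-vector space of finite dimension $s$, and let $A = \bigoplus_{i \ge 0} A_i$ be an $\mathbb{N}$-graded associative $k$-algebra. Let $\psi : \Lambda U \to A$ be a $k$-algebra homomorphism from the exterior algebra of $U$ such that $\psi(\Lambda^i U) \subseteq A_i$ for every $i \ge 0$. If the restriction of $\psi$ to the top exterior power $\Lambda^s U$ is nonzero, then $\psi$ is injective. -/
/-!
Choose a basis of `U` and the induced basis `e_S` of `Λ U`, indexed by subsets `S`. If `z ≠ 0`,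
let `S` be a subset of minimal size with nonzero coefficient in `z`. Then `e_T ∧ e_{Sᶜ} = 0` for
every other `T` in the support of `z`, while `e_S ∧ e_{Sᶜ} = ± e_univ`, so `z ∧ e_{Sᶜ}` is a
nonzero multiple of the generator `e_univ` of the line `Λ^s U`. Hence the kernel of `ψ`, being an
ideal, contains `Λ^s U` as soon as it is nonzero.
-/

namespace ExteriorAlgebra

open Module Set.powersetCard

variable {R M I : Type*} [CommRing R] [AddCommGroup M] [Module R M] [LinearOrder I]
  (b : Basis I R M)

lemma basis_mul_eq_zero_of_not_disjoint {s t : Finset I} (h : ¬Disjoint s t) :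
    b.ExteriorAlgebra s * b.ExteriorAlgebra t = 0 :=
  basis_mul_of_not_disjoint b (ofCard (s := s) rfl) (ofCard (s := t) rfl) h

variable [Fintype I]

lemma exists_basis_mul_basis_compl (s : Finset I) :
    ∃ ε : ℤˣ, b.ExteriorAlgebra s * b.ExteriorAlgebra sᶜ = ε • b.ExteriorAlgebra Finset.univ := by
  have h : Disjoint (ofCard (s := s) rfl).val (ofCard (s := sᶜ) rfl).val := disjoint_compl_right
  have hu : (disjUnion h).val = Finset.univ := by
    simp [coe_disjUnion]
  exact ⟨_, (basis_mul_of_disjoint b _ _ h).trans (by rw [hu])⟩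

lemma exteriorPower_card_eq_span_basis_univ :
    ⋀[R]^(Fintype.card I) M = R ∙ b.ExteriorAlgebra Finset.univ := by
  apply le_antisymm
  · intro x hx
    rw [← Subtype.coe_mk x hx, ← (b.exteriorPower _).sum_repr ⟨x, hx⟩, Submodule.coe_sum]
    refine Submodule.sum_mem _ fun s _ => Submodule.smul_mem _ _ ?_
    rw [← basis_eq_coe_basis, Finset.eq_univ_of_card s.val s.prop]
    exact Submodule.mem_span_singleton_self _
  · rw [Submodule.span_singleton_le_iff_mem,
      ← val_ofCard (Finset.card_univ : (Finset.univ : Finset I).card = _), basis_eq_coe_basis]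
    exact Submodule.coe_mem _

lemma exists_mul_eq_smul_basis_univ {z : ExteriorAlgebra R M} (hz : z ≠ 0) :
    ∃ y, ∃ c : R, c ≠ 0 ∧ z * y = c • b.ExteriorAlgebra Finset.univ := by
  classical
  set B := b.ExteriorAlgebra
  obtain ⟨s, hs, hmin⟩ := (B.repr z).support.exists_min_image Finset.card
    (Finsupp.support_nonempty_iff.mpr (by simpa using hz))
  obtain ⟨ε, hε⟩ := exists_basis_mul_basis_compl b s
  have hvanish : ∀ t ≠ s, B.repr z t • (B t * B sᶜ) = 0 := by
    intro t hts
    by_cases ht : t ∈ (B.repr z).support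
    · have hdisj : ¬Disjoint t sᶜ := fun hdisj => hts <|
        Finset.eq_of_subset_of_card_le (disjoint_compl_right_iff.mp hdisj) (hmin t ht)
      rw [basis_mul_eq_zero_of_not_disjoint b hdisj, smul_zero]
    · rw [Finsupp.notMem_support_iff.mp ht, zero_smul]
  refine ⟨B sᶜ, ε • B.repr z s, (smul_ne_zero_iff_ne ε).mpr (Finsupp.mem_support_iff.mp hs), ?_⟩
  calc z * B sᶜ = ∑ t, B.repr z t • (B t * B sᶜ) := by
        simp only [← smul_mul_assoc, ← Finset.sum_mul, B.sum_repr]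
    _ = B.repr z s • (B s * B sᶜ) := Fintype.sum_eq_single s hvanish
    _ = (ε • B.repr z s) • B Finset.univ := by rw [hε, smul_comm, smul_assoc]

theorem algHom_injective_of_map_basis_univ_ne_zero {K A : Type*} [Field K] [Module K M]
    [Semiring A] [Algebra K A] (b : Basis I K M) (ψ : ExteriorAlgebra K M →ₐ[K] A)
    (hψ : ψ (b.ExteriorAlgebra Finset.univ) ≠ 0) : Function.Injective ψ := by
  rw [injective_iff_map_eq_zero]
  intro z hz
  by_contra hz0
  obtain ⟨y, c, hc, hzy⟩ := exists_mul_eq_smul_basis_univ b hz0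
  have hψzy := congrArg ψ hzy
  rw [map_mul, hz, zero_mul, map_smul] at hψzy
  exact hψ ((smul_eq_zero.mp hψzy.symm).resolve_left hc)

end ExteriorAlgebra

theorem exteriorAlgebra_algHom_injective_of_top_ne_zero_general
    {k : Type*} [Field k] {U : Type*} [AddCommGroup U] [Module k U]
    [FiniteDimensional k U] {s : ℕ} (hU : Module.finrank k U = s)
    {A : Type*} [Ring A] [Algebra k A]
    (ψ : ExteriorAlgebra k U →ₐ[k] A)
    (htop : ∃ x ∈
      (LinearMap.range (ExteriorAlgebra.ι k : U →ₗ[k] ExteriorAlgebra k U)) ^ s,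
      ψ x ≠ 0) :
    Function.Injective ψ := by
  let b := Module.finBasisOfFinrankEq k U hU
  refine ExteriorAlgebra.algHom_injective_of_map_basis_univ_ne_zero b ψ fun hψ => ?_
  obtain ⟨x, hx, hψx⟩ := htop
  have hx' : x ∈ k ∙ b.ExteriorAlgebra Finset.univ := by
    rwa [← ExteriorAlgebra.exteriorPower_card_eq_span_basis_univ, Fintype.card_fin]
  obtain ⟨c, rfl⟩ := Submodule.mem_span_singleton.mp hx'
  exact hψx (by rw [map_smul, hψ, smul_zero])

/-- Let `U` be an `s`-dimensional vector space over a field `k`, let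
`A` be an ℕ-graded associative `k`-algebra, and let `ψ : Λ U → A` be a `k`-algebra
homomorphism sending `Λ^i U` into the degree-`i` component for every `i`. If `ψ` is
nonzero on the top exterior power `Λ^s U`, then `ψ` is injective. -/
theorem exteriorAlgebra_algHom_injective_of_top_ne_zero
    {k : Type*} [Field k] {U : Type*} [AddCommGroup U] [Module k U]
    [FiniteDimensional k U] {s : ℕ} (hU : Module.finrank k U = s)
    {A : Type*} [Ring A] [Algebra k A]
    (𝒜 : ℕ → Submodule k A) [GradedAlgebra 𝒜]
    (ψ : ExteriorAlgebra k U →ₐ[k] A)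
    (hgr : ∀ i : ℕ, ∀ x ∈
      (LinearMap.range (ExteriorAlgebra.ι k : U →ₗ[k] ExteriorAlgebra k U)) ^ i,
      ψ x ∈ 𝒜 i)
    (htop : ∃ x ∈
      (LinearMap.range (ExteriorAlgebra.ι k : U →ₗ[k] ExteriorAlgebra k U)) ^ s,
      ψ x ≠ 0) :
    Function.Injective ψ :=
  exteriorAlgebra_algHom_injective_of_top_ne_zero_general hU ψ htop
end

section
/- Let $V$ be a finite-dimensional complex vector space, let $\beta : V \to \mathbb{C}$ be a nonzero linear form, and let $\sigma \in GL(V)$ be a linear automorphism that fixes the hyperplane $\ker \beta$ pointwise. If a polynomial function $f$ on $V$ satisfies $f \circ \sigma = -f$, then $\beta$ divides $f$ in the ring of polynomial functions on $V$. -/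
/-!
Since `σ` fixes `ker β` pointwise, `f v = -f v` there, so `f` vanishes on `ker β`. Pick `v₀` with
`β v₀ = 1` and let `π v = v - β v • v₀` be the projection onto `ker β` along `v₀`. For a linear
form `φ` one has `φ v = β v * φ v₀ + φ (π v)`, and the shape `h = β * g + h ∘ π` with `g`
polynomial survives sums and products; applied to `f`, the term `f ∘ π` vanishes.
-/

section

variable {R V : Type*} [CommRing R] [AddCommGroup V] [Module R V]

variable (R V) in
abbrev polynomialFunctionsOn : Subalgebra R (V → R) :=
  Algebra.adjoin R (Set.range fun φ : Module.Dual R V => (φ : V → R))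

theorem comp_linearMap_mem_polynomialFunctionsOn {h : V → R}
    (hh : h ∈ polynomialFunctionsOn R V) (L : V →ₗ[R] V) :
    (fun v => h (L v)) ∈ polynomialFunctionsOn R V := by
  induction hh using Algebra.adjoin_induction with
  | mem _ hφ =>
    obtain ⟨φ, rfl⟩ := hφ
    exact Algebra.subset_adjoin ⟨φ ∘ₗ L, rfl⟩
  | algebraMap r => exact Subalgebra.algebraMap_mem _ r
  | add _ _ _ _ h₁ h₂ => exact add_mem h₁ h₂
  | mul _ _ _ _ h₁ h₂ => exact mul_mem h₁ h₂

theorem exists_eq_mul_add_comp_sub_smul {h : V → R} (hh : h ∈ polynomialFunctionsOn R V)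
    (β : Module.Dual R V) (v₀ : V) :
    ∃ g ∈ polynomialFunctionsOn R V, ∀ v, h v = β v * g v + h (v - β v • v₀) := by
  induction hh using Algebra.adjoin_induction with
  | mem _ hφ =>
    obtain ⟨φ, rfl⟩ := hφ
    refine ⟨algebraMap R _ (φ v₀), Subalgebra.algebraMap_mem _ _, fun v => ?_⟩
    simp only [LinearMap.map_sub, LinearMap.map_smul, smul_eq_mul, Pi.algebraMap_apply,
      Algebra.algebraMap_self, RingHom.id_apply]
    ring
  | algebraMap r => exact ⟨0, zero_mem _, fun v => by simp⟩
  | add h₁ h₂ _ _ ih₁ ih₂ =>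
    obtain ⟨g₁, hg₁, e₁⟩ := ih₁
    obtain ⟨g₂, hg₂, e₂⟩ := ih₂
    exact ⟨g₁ + g₂, add_mem hg₁ hg₂, fun v => by simp only [Pi.add_apply, e₁ v, e₂ v]; ring⟩
  | mul h₁ h₂ hh₁ hh₂ ih₁ ih₂ =>
    obtain ⟨g₁, hg₁, e₁⟩ := ih₁
    obtain ⟨g₂, hg₂, e₂⟩ := ih₂
    -- `h₁ h₂ = β g₁ h₂ + (h₁ ∘ π) (β g₂ + h₂ ∘ π)`, and `h₁ ∘ π` is again polynomial.
    have hπ : (fun v => h₁ (v - β v • v₀)) ∈ polynomialFunctionsOn R V :=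
      comp_linearMap_mem_polynomialFunctionsOn hh₁ (LinearMap.id - β.smulRight v₀ : V →ₗ[R] V)
    refine ⟨g₁ * h₂ + (fun v => h₁ (v - β v • v₀)) * g₂,
      add_mem (mul_mem hg₁ hh₂) (mul_mem hπ hg₂), fun v => ?_⟩
    simp only [Pi.mul_apply, Pi.add_apply]
    linear_combination h₂ v * e₁ v + h₁ (v - β v • v₀) * e₂ v

theorem exists_eq_mul_of_forall_ker_apply_eq_zero {K : Type*} [Field K] [Module K V]
    {h : V → K} (hh : h ∈ polynomialFunctionsOn K V) (β : Module.Dual K V)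
    (hzero : ∀ v, β v = 0 → h v = 0) :
    ∃ g ∈ polynomialFunctionsOn K V, ∀ v, h v = β v * g v := by
  obtain rfl | hβ := eq_or_ne β 0
  · exact ⟨0, zero_mem _, fun v => by simp [hzero v rfl]⟩
  obtain ⟨v₀, hv₀⟩ := β.surjective_of_ne_zero hβ 1
  obtain ⟨g, hg, e⟩ := exists_eq_mul_add_comp_sub_smul hh β v₀
  refine ⟨g, hg, fun v => ?_⟩
  rw [e v, hzero _ (by simp [hv₀]), add_zero]

end

theorem linearForm_dvd_of_anti_invariant_general
    {V : Type*} [AddCommGroup V] [Module ℂ V]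
    (β : Module.Dual ℂ V)
    (σ : V ≃ₗ[ℂ] V) (hσ : ∀ v : V, β v = 0 → σ v = v)
    (f : V → ℂ)
    (hf : f ∈ Algebra.adjoin ℂ
      (Set.range fun φ : Module.Dual ℂ V => (φ : V → ℂ)))
    (hanti : ∀ v : V, f (σ v) = - f v) :
    ∃ g ∈ Algebra.adjoin ℂ
      (Set.range fun φ : Module.Dual ℂ V => (φ : V → ℂ)),
      ∀ v : V, f v = β v * g v :=
  exists_eq_mul_of_forall_ker_apply_eq_zero hf β fun v hv =>
    self_eq_neg.mp (by rw [← hanti v, hσ v hv])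

/-- Let `V` be a finite-dimensional complex vector space, `β` a
nonzero linear form on `V`, and `σ` a linear automorphism of `V` fixing the
hyperplane `ker β` pointwise. If a polynomial function `f` on `V` (an element of
the subalgebra of `V → ℂ` generated by the linear forms) satisfies `f ∘ σ = -f`,
then `β` divides `f` in the ring of polynomial functions on `V`. -/
theorem linearForm_dvd_of_anti_invariant
    {V : Type*} [AddCommGroup V] [Module ℂ V] [FiniteDimensional ℂ V]
    (β : Module.Dual ℂ V) (hβ : β ≠ 0)
    (σ : V ≃ₗ[ℂ] V) (hσ : ∀ v : V, β v = 0 → σ v = v)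
    (f : V → ℂ)
    (hf : f ∈ Algebra.adjoin ℂ
      (Set.range fun φ : Module.Dual ℂ V => (φ : V → ℂ)))
    (hanti : ∀ v : V, f (σ v) = - f v) :
    ∃ g ∈ Algebra.adjoin ℂ
      (Set.range fun φ : Module.Dual ℂ V => (φ : V → ℂ)),
      ∀ v : V, f v = β v * g v :=
  linearForm_dvd_of_anti_invariant_general β σ hσ f hf hanti
end

section
/- Let $V$ be a finite-dimensional complex vector space and let $\beta_1, \dots, \beta_k : V \to \mathbb{C}$ be nonzero linear forms that are pairwise non-proportional (no $\beta_i$ is a scalar multiple of $\beta_j$ for $i \ne j$). For each $j$, let $\sigma_j \in GL(V)$ be a linear automorphism fixing the hyperplane $\ker \beta_j$ pointwise. If a polynomial function $f$ on $V$ satisfies $f \circ \sigma_j = -f$ for every $j = 1, \dots, k$, then the product $\beta_1 \beta_2 \cdots \beta_k$ divides $f$ in the ring of polynomial functions on $V$. -/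
/-!
Choosing a basis identifies the polynomial functions on `V` with the polynomial ring in the
coordinate functions, and a nonzero linear form `β` is a coordinate of a suitable basis (the
predual of a basis of `V*` through `β`). Hence `β` is prime and divides every polynomial function
vanishing on `ker β`. Since `σ j` fixes `ker (β j)` pointwise, `f = -f` on that hyperplane, so each
`β j` divides `f`; pairwise non-proportional forms are pairwise non-associated primes, so their
product divides `f`.
-/

open MvPolynomial

theorem Finset.prod_dvd_of_prime_of_not_dvd {ι M : Type*} [CommMonoidWithZero M]
    {s : Finset ι} {p : ι → M} {a : M} (hp : ∀ i ∈ s, Prime (p i))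
    (hpair : (s : Set ι).Pairwise fun i j => ¬p i ∣ p j) (hdvd : ∀ i ∈ s, p i ∣ a) :
    ∏ i ∈ s, p i ∣ a := by
  classical
  induction s using Finset.induction_on generalizing a with
  | empty => simp
  | insert i s hi ih =>
    rw [coe_insert, Set.pairwise_insert] at hpair
    obtain ⟨b, rfl⟩ := hdvd i (mem_insert_self i s)
    rw [prod_insert hi]
    refine mul_dvd_mul_left _ (ih (fun j hj => hp j (mem_insert_of_mem hj)) hpair.1 fun j hj => ?_)
    have hji : j ≠ i := ne_of_mem_of_not_mem hj hi
    exact ((hp j (mem_insert_of_mem hj)).dvd_or_dvd (hdvd j (mem_insert_of_mem hj))).resolve_left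
      (hpair.2 j hj hji.symm).2

namespace MvPolynomial

variable {σ R : Type*} [CommRing R]

theorem X_dvd_sub_aeval_update_zero [DecidableEq σ] (i : σ) (p : MvPolynomial σ R) :
    X i ∣ p - aeval (Function.update X i 0) p := by
  rw [← Ideal.mem_span_singleton, ← Ideal.Quotient.eq]
  have h : (Ideal.Quotient.mkₐ R (Ideal.span {X i})).comp (aeval (Function.update X i 0)) =
      Ideal.Quotient.mkₐ R _ := by
    ext j
    rcases eq_or_ne j i with rfl | hj
    · simp
    · simp [hj]
  exact (AlgHom.congr_fun h p).symm

theorem X_dvd_of_eval_eq_zero [IsDomain R] [Infinite R] {i : σ} {p : MvPolynomial σ R}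
    (h : ∀ x : σ → R, x i = 0 → eval x p = 0) : X i ∣ p := by
  classical
  suffices aeval (Function.update (X : σ → MvPolynomial σ R) i 0) p = 0 by
    simpa only [this, sub_zero] using X_dvd_sub_aeval_update_zero i p
  refine MvPolynomial.funext fun x => ?_
  rw [map_zero, ← aeval_eq_eval, comp_aeval_apply]
  have hx : (fun j => aeval x (Function.update (X : σ → MvPolynomial σ R) i 0 j)) =
      Function.update x i 0 := by
    ext j
    rcases eq_or_ne j i with rfl | hj
    · simp
    · simp [hj]
  rw [hx, aeval_eq_eval]
  exact h _ (Function.update_self ..)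

end MvPolynomial

section PolynomialMaps

variable {K V : Type*} [Field K] [AddCommGroup V] [Module K V]

variable (K V) in
abbrev polynomialMaps : Subalgebra K (V → K) :=
  Algebra.adjoin K (Set.range fun φ : Module.Dual K V => (φ : V → K))

def Module.Dual.toPolynomialMap (φ : Module.Dual K V) : polynomialMaps K V :=
  ⟨φ, Algebra.subset_adjoin ⟨φ, rfl⟩⟩

@[simp]
theorem Module.Dual.coe_toPolynomialMap (φ : Module.Dual K V) :
    (φ.toPolynomialMap : V → K) = φ :=
  rfl

namespace Module.Basis

variable {ι : Type*} (b : Basis ι K V)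

theorem aeval_coord_apply (p : MvPolynomial ι K) (v : V) :
    aeval (fun i => ⇑(b.coord i)) p v = eval (fun i => b.coord i v) p := by
  change Pi.evalAlgHom K (fun _ => K) v (aeval _ p) = _
  rw [comp_aeval_apply, aeval_eq_eval]
  rfl

theorem eval_eq_aeval_coord_equivFun_symm [Finite ι] (p : MvPolynomial ι K) (x : ι → K) :
    eval x p = aeval (fun i => ⇑(b.coord i)) p (b.equivFun.symm x) := by
  simp only [aeval_coord_apply, coord_equivFun_symm]

theorem aeval_coord_injective [Infinite K] [Finite ι] :
    Function.Injective (aeval fun i => ⇑(b.coord i) : MvPolynomial ι K →ₐ[K] V → K) := by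
  refine (injective_iff_map_eq_zero _).2 fun p hp => MvPolynomial.funext fun x => ?_
  rw [eval_eq_aeval_coord_equivFun_symm b, hp, map_zero]
  rfl

theorem range_aeval_coord [Finite ι] :
    (aeval fun i => ⇑(b.coord i) : MvPolynomial ι K →ₐ[K] V → K).range = polynomialMaps K V := by
  have := Fintype.ofFinite ι
  rw [← Algebra.adjoin_range_eq_range_aeval]
  refine le_antisymm (Algebra.adjoin_mono ?_) (Algebra.adjoin_le ?_)
  · rintro _ ⟨i, rfl⟩
    exact ⟨b.coord i, rfl⟩
  · rintro _ ⟨φ, rfl⟩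
    change ⇑φ ∈ Algebra.adjoin K _
    rw [← b.sum_dual_apply_smul_coord φ, LinearMap.coe_sum]
    exact Subalgebra.sum_mem _ fun i _ =>
      Subalgebra.smul_mem _ (Algebra.subset_adjoin (Set.mem_range_self i)) _

noncomputable def polynomialMapsEquiv [Infinite K] [Finite ι] :
    MvPolynomial ι K ≃ₐ[K] polynomialMaps K V :=
  (AlgEquiv.ofInjective _ b.aeval_coord_injective).trans
    (Subalgebra.equivOfEq _ _ b.range_aeval_coord)

theorem coe_polynomialMapsEquiv [Infinite K] [Finite ι] (p : MvPolynomial ι K) :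
    (b.polynomialMapsEquiv p : V → K) = aeval (fun i => ⇑(b.coord i)) p :=
  rfl

theorem polynomialMapsEquiv_X [Infinite K] [Finite ι] (i : ι) :
    b.polynomialMapsEquiv (X i) = Module.Dual.toPolynomialMap (b.coord i) :=
  Subtype.ext (by simp [coe_polynomialMapsEquiv])

theorem coord_dualBasis_map_evalEquiv_symm [Module.IsReflexive K V] [DecidableEq ι] [Finite ι]
    (c : Basis ι K (Module.Dual K V)) (i : ι) :
    (c.dualBasis.map (Module.evalEquiv K V).symm).coord i = c i := by
  refine Basis.ext (c.dualBasis.map (Module.evalEquiv K V).symm) fun j => ?_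
  rw [Basis.coord_apply, Basis.repr_self, Basis.map_apply, Module.apply_evalEquiv_symm_apply,
    Basis.dualBasis_apply_self, Finsupp.single_eq_pi_single, Pi.single_apply]

end Module.Basis

namespace Module.Dual

theorem exists_basis_coord_eq [FiniteDimensional K V] {β : Module.Dual K V} (hβ : β ≠ 0) :
    ∃ (s : Set (Module.Dual K V)) (b : Basis s K V) (i : s), b.coord i = β := by
  have hli : LinearIndepOn K id {β} := .singleton hβ
  obtain ⟨s, c, hc, hβs⟩ : ∃ (s : Set (Module.Dual K V)) (c : Basis s K (Module.Dual K V)),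
      ⇑c = Subtype.val ∧ β ∈ s :=
    ⟨_, .extend hli, Basis.coe_extend hli, hli.subset_extend _ rfl⟩
  classical
  have := Module.Finite.finite_basis c
  exact ⟨s, c.dualBasis.map (Module.evalEquiv K V).symm, ⟨β, hβs⟩,
    by rw [c.coord_dualBasis_map_evalEquiv_symm, hc]⟩

theorem prime_toPolynomialMap [Infinite K] [FiniteDimensional K V] {β : Module.Dual K V}
    (hβ : β ≠ 0) : Prime β.toPolynomialMap := by
  obtain ⟨s, b, i, rfl⟩ := exists_basis_coord_eq hβ
  have := Module.Finite.finite_basis b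
  rw [← b.polynomialMapsEquiv_X]
  exact (MulEquiv.prime_iff b.polynomialMapsEquiv.toMulEquiv).2 X_prime

theorem toPolynomialMap_dvd_of_forall_mem_ker [Infinite K] [FiniteDimensional K V]
    {β : Module.Dual K V} (hβ : β ≠ 0) {f : polynomialMaps K V}
    (hf : ∀ v ∈ LinearMap.ker β, (f : V → K) v = 0) : β.toPolynomialMap ∣ f := by
  obtain ⟨s, b, i, rfl⟩ := exists_basis_coord_eq hβ
  have := Module.Finite.finite_basis b
  obtain ⟨p, rfl⟩ := b.polynomialMapsEquiv.surjective f
  rw [← b.polynomialMapsEquiv_X]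
  refine map_dvd _ (X_dvd_of_eval_eq_zero fun x hx => ?_)
  rw [b.eval_eq_aeval_coord_equivFun_symm, ← b.coe_polynomialMapsEquiv]
  exact hf _ (by rwa [LinearMap.mem_ker, Basis.coord_equivFun_symm])

theorem exists_eq_smul_of_toPolynomialMap_dvd {β γ : Module.Dual K V}
    (h : β.toPolynomialMap ∣ γ.toPolynomialMap) : ∃ c : K, γ = c • β := by
  obtain ⟨g, hg⟩ := h
  have hker : ⨅ _ : Unit, LinearMap.ker β ≤ LinearMap.ker γ := fun v hv => by
    have hv : β v = 0 := by simpa using hv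
    simpa [hv] using congr_fun (congr_arg Subtype.val hg) v
  simpa [Submodule.mem_span_singleton, eq_comm] using mem_span_of_iInf_ker_le_ker hker

end Module.Dual

end PolynomialMaps

/-- Let `β 1, …, β k` be pairwise non-proportional nonzero linear forms
on a finite-dimensional complex vector space `V`, and for each `j` let `σ j` be a
linear automorphism of `V` fixing the hyperplane `ker (β j)` pointwise. If a
polynomial function `f` on `V` satisfies `f ∘ σ j = -f` for all `j`, then the
product `β 1 ⋯ β k` divides `f` in the ring of polynomial functions on `V`. -/
theorem prod_linearForms_dvd_of_anti_invariant
    {V : Type*} [AddCommGroup V] [Module ℂ V] [FiniteDimensional ℂ V]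
    {k : ℕ} (β : Fin k → Module.Dual ℂ V) (hβ : ∀ j, β j ≠ 0)
    (hprop : ∀ i j : Fin k, i ≠ j → ∀ c : ℂ, β i ≠ c • β j)
    (σ : Fin k → (V ≃ₗ[ℂ] V)) (hσ : ∀ j, ∀ v : V, β j v = 0 → σ j v = v)
    (f : V → ℂ)
    (hf : f ∈ Algebra.adjoin ℂ
      (Set.range fun φ : Module.Dual ℂ V => (φ : V → ℂ)))
    (hanti : ∀ j, ∀ v : V, f (σ j v) = - f v) :
    ∃ g ∈ Algebra.adjoin ℂ
      (Set.range fun φ : Module.Dual ℂ V => (φ : V → ℂ)),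
      ∀ v : V, f v = (∏ j, β j v) * g v := by
  have hker : ∀ j, ∀ v ∈ LinearMap.ker (β j), f v = 0 := fun j v hv => by
    have := hanti j v
    rwa [hσ j v hv, self_eq_neg] at this
  obtain ⟨g, hg⟩ := Finset.prod_dvd_of_prime_of_not_dvd (s := Finset.univ) (a := ⟨f, hf⟩)
    (fun j _ => (β j).prime_toPolynomialMap (hβ j))
    (fun i _ j _ hij hdvd =>
      (Module.Dual.exists_eq_smul_of_toPolynomialMap_dvd hdvd).elim (hprop j i hij.symm))
    (fun j _ => (β j).toPolynomialMap_dvd_of_forall_mem_ker (hβ j) (hker j))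
  refine ⟨g, g.2, fun v => ?_⟩
  simpa using congr_fun (congr_arg Subtype.val hg) v
end

section
/- Let $V$ be a finite-dimensional complex vector space and let $\beta_1, \dots, \beta_k : V \to \mathbb{C}$ be nonzero linear forms that are pairwise non-proportional. For each $j$, let $\sigma_j \in GL(V)$ be a linear automorphism fixing the hyperplane $\ker \beta_j$ pointwise. If a polynomial function $f$ on $V$ is homogeneous of degree $k$ and satisfies $f \circ \sigma_j = -f$ for every $j = 1, \dots, k$, then $f$ is a scalar multiple of the product $\beta_1 \beta_2 \cdots \beta_k$. -/
/-!
Since `σ j` fixes `ker (β j)` pointwise and `f ∘ σ j = -f`, the function `f` vanishes on every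
hyperplane `ker (β j)`. A polynomial function vanishing on `ker β` is `β` times a polynomial
function, and polynomial functions on a finite-dimensional space form an integral domain (they are
the polynomials in the coordinates). Hence the quotient `f / β 0` is homogeneous of degree `k - 1`
and still vanishes on the other hyperplanes, as `β 0` is not identically zero on any of them.
Peeling off the `k` factors leaves a homogeneous function of degree `0`, a constant.
-/

open Module

variable (K V : Type*) in
def polyFun [CommSemiring K] [AddCommMonoid V] [Module K V] : Subalgebra K (V → K) :=
  Algebra.adjoin K (Set.range fun φ : Dual K V => (φ : V → K))

def IsHomogeneousFun {K V : Type*} [Monoid K] [MulAction K V] (k : ℕ) (p : V → K) : Prop :=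
  ∀ (c : K) (v : V), p (c • v) = c ^ k * p v

section CommRing

variable {K V W : Type*} [CommRing K] [AddCommGroup V] [Module K V] [AddCommGroup W] [Module K W]

theorem dual_mem_polyFun (φ : Dual K V) : (φ : V → K) ∈ polyFun K V :=
  Algebra.subset_adjoin ⟨φ, rfl⟩

theorem comp_mem_polyFun (T : W →ₗ[K] V) {p : V → K} (hp : p ∈ polyFun K V) :
    p ∘ T ∈ polyFun K W := by
  induction hp using Algebra.adjoin_induction with
  | mem x hx =>
    obtain ⟨φ, rfl⟩ := hx
    exact dual_mem_polyFun (φ ∘ₗ T)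
  | algebraMap r => exact Subalgebra.algebraMap_mem _ r
  | add x y _ _ ihx ihy => exact add_mem ihx ihy
  | mul x y _ _ ihx ihy => exact mul_mem ihx ihy

theorem exists_apply_sub_smul_eq (γ : Dual K V) (u : V) {p : V → K}
    (hp : p ∈ polyFun K V) :
    ∃ g ∈ polyFun K V, ∀ v, p (v - γ v • u) = p v - γ v * g v := by
  induction hp using Algebra.adjoin_induction with
  | mem x hx =>
    obtain ⟨φ, rfl⟩ := hx
    refine ⟨fun _ => φ u, Subalgebra.algebraMap_mem _ (φ u), fun v => ?_⟩
    simp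
  | algebraMap r => exact ⟨0, zero_mem _, fun v => by simp⟩
  | add x y _ _ ihx ihy =>
    obtain ⟨g, hg, hgx⟩ := ihx
    obtain ⟨h, hh, hhy⟩ := ihy
    exact ⟨g + h, add_mem hg hh, fun v => by simp only [Pi.add_apply, hgx, hhy]; ring⟩
  | mul x y hx hy ihx ihy =>
    obtain ⟨g, hg, hgx⟩ := ihx
    obtain ⟨h, hh, hhy⟩ := ihy
    refine ⟨g * y + x * h - (γ : V → K) * g * h,
      sub_mem (add_mem (mul_mem hg hy) (mul_mem hx hh))
        (mul_mem (mul_mem (dual_mem_polyFun γ) hg) hh), fun v => ?_⟩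
    simp only [Pi.mul_apply, Pi.sub_apply, Pi.add_apply, hgx, hhy]
    ring

end CommRing

section Field

variable {K V : Type*} [Field K] [AddCommGroup V] [Module K V]

theorem exists_eq_mul_of_vanishes_on_ker {β : Dual K V} (hβ : β ≠ 0) {p : V → K}
    (hp : p ∈ polyFun K V) (hvan : ∀ v, β v = 0 → p v = 0) :
    ∃ g ∈ polyFun K V, ∀ v, p v = β v * g v := by
  obtain ⟨u, hu⟩ : ∃ u, β u = 1 := by
    obtain ⟨w, hw⟩ := DFunLike.ne_iff.mp hβ
    exact ⟨(β w)⁻¹ • w, by simp [inv_mul_cancel₀ hw]⟩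
  obtain ⟨g, hg, hpg⟩ := exists_apply_sub_smul_eq β u hp
  refine ⟨g, hg, fun v => ?_⟩
  have := hpg v
  rw [hvan _ (by simp [hu])] at this
  linear_combination -this

theorem exists_eq_smul_of_vanishes_on_ker {β γ : Dual K V}
    (h : ∀ v, β v = 0 → γ v = 0) : ∃ c : K, γ = c • β := by
  have := mem_span_of_iInf_ker_le_ker (L := fun _ : Unit => β) (K := γ)
    (by simpa [SetLike.le_def] using h)
  simpa [Set.range_const, Submodule.mem_span_singleton, eq_comm] using this

end Field

section Domain

variable {K V ι : Type*} [Field K] [AddCommGroup V] [Module K V]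

noncomputable def coordAlgHom (b : Basis ι K V) : MvPolynomial ι K →ₐ[K] (V → K) :=
  MvPolynomial.aeval fun i => (b.coord i : V → K)

theorem coordAlgHom_apply (b : Basis ι K V) (P : MvPolynomial ι K) (v : V) :
    coordAlgHom b P v = MvPolynomial.eval (b.repr v) P := by
  change Pi.evalAlgHom K (fun _ : V => K) v (MvPolynomial.aeval _ P) = _
  rw [MvPolynomial.comp_aeval_apply]
  rfl

theorem polyFun_le_range_coordAlgHom [Fintype ι] (b : Basis ι K V) :
    polyFun K V ≤ (coordAlgHom b).range := by
  refine Algebra.adjoin_le ?_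
  rintro _ ⟨φ, rfl⟩
  refine ⟨∑ i, MvPolynomial.C (φ (b i)) * MvPolynomial.X i, ?_⟩
  ext v
  dsimp only
  conv_rhs => rw [← b.sum_repr v, map_sum]
  simp [coordAlgHom, mul_comm]

theorem coordAlgHom_injective [Infinite K] [Finite ι] (b : Basis ι K V) :
    Function.Injective (coordAlgHom b) := by
  refine (injective_iff_map_eq_zero _).mpr fun P hP => MvPolynomial.funext fun x => ?_
  have := congr_fun hP (b.equivFun.symm x)
  rwa [coordAlgHom_apply, ← Basis.equivFun_apply, LinearEquiv.apply_symm_apply] at this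

theorem eq_zero_of_mul_eq_zero [Infinite K] [FiniteDimensional K V] {p q : V → K}
    (hp : p ∈ polyFun K V) (hq : q ∈ polyFun K V) (hpq : p * q = 0) (hp0 : p ≠ 0) : q = 0 := by
  let b := finBasis K V
  obtain ⟨P, rfl⟩ := (AlgHom.mem_range _).mp (polyFun_le_range_coordAlgHom b hp)
  obtain ⟨Q, rfl⟩ := (AlgHom.mem_range _).mp (polyFun_le_range_coordAlgHom b hq)
  rw [← map_mul, ← map_zero (coordAlgHom b), (coordAlgHom_injective b).eq_iff] at hpq
  rcases mul_eq_zero.mp hpq with rfl | rfl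
  · exact absurd (map_zero _) hp0
  · exact map_zero _

end Domain

section Homogeneous

variable {K V : Type*} [Field K] [Infinite K] [AddCommGroup V] [Module K V]

theorem eq_zero_of_mul_dual_eq_zero [FiniteDimensional K V] {β : Dual K V} (hβ : β ≠ 0)
    {q : V → K} (hq : q ∈ polyFun K V) (h : ∀ v, β v * q v = 0) : ∀ v, q v = 0 :=
  congr_fun (eq_zero_of_mul_eq_zero (dual_mem_polyFun β) hq (funext h)
    (by simpa [DFunLike.ext_iff] using hβ))

/-- Homogeneity at the scalar `0` follows from homogeneity at all nonzero scalars, because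
`t * (p (t • v) - t ^ k * p v)` vanishes identically as a polynomial function of `t`. -/
theorem IsHomogeneousFun.of_ne_zero {k : ℕ} {p : V → K} (hp : p ∈ polyFun K V)
    (h : ∀ c : K, c ≠ 0 → ∀ v, p (c • v) = c ^ k * p v) : IsHomogeneousFun k p := by
  intro c v
  have hline : (fun t : K => p (t • v) - t ^ k * p v) ∈ polyFun K K := by
    have hsmul := comp_mem_polyFun (LinearMap.id.smulRight v : K →ₗ[K] V) hp
    have hpow := pow_mem (dual_mem_polyFun (LinearMap.id : Dual K K)) k
    exact sub_mem hsmul (mul_mem hpow (Subalgebra.algebraMap_mem _ (p v)))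
  have := eq_zero_of_mul_dual_eq_zero (β := LinearMap.id)
    (fun h => one_ne_zero (LinearMap.congr_fun h 1)) hline fun t => by
    rcases eq_or_ne t 0 with rfl | ht
    · simp
    · simp [h t ht]
  exact sub_eq_zero.mp (this c)

theorem IsHomogeneousFun.of_mul_dual [FiniteDimensional K V] {k : ℕ} {β : Dual K V}
    (hβ : β ≠ 0) {p q : V → K} (hq : q ∈ polyFun K V) (hpq : ∀ v, p v = β v * q v)
    (hp : IsHomogeneousFun (k + 1) p) : IsHomogeneousFun k q := by
  refine .of_ne_zero hq fun c hc v => sub_eq_zero.mp <|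
    eq_zero_of_mul_dual_eq_zero hβ (q := fun v => q (c • v) - c ^ k * q v) ?_ (fun v => ?_) v
  · exact sub_mem (comp_mem_polyFun (c • LinearMap.id) hq) (Subalgebra.smul_mem _ hq _)
  · have hscaled := hp c v
    rw [hpq, hpq, map_smul, smul_eq_mul] at hscaled
    have := mul_left_cancel₀ hc (a := c) (b := β v * q (c • v)) (c := c ^ k * (β v * q v))
      (by linear_combination hscaled)
    linear_combination this

end Homogeneous

section Product

variable {K V : Type*} [Field K] [Infinite K] [AddCommGroup V] [Module K V] [FiniteDimensional K V]

theorem vanishes_on_ker_of_mul_vanishes_on_ker {β γ : Dual K V}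
    (hγ : ∀ c : K, γ ≠ c • β) {q : V → K} (hq : q ∈ polyFun K V)
    (h : ∀ v, β v = 0 → γ v * q v = 0) : ∀ v, β v = 0 → q v = 0 := by
  have hγH : γ ∘ₗ (LinearMap.ker β).subtype ≠ 0 := fun h0 =>
    have ⟨c, hc⟩ := exists_eq_smul_of_vanishes_on_ker fun v hv =>
      LinearMap.congr_fun h0 (⟨v, hv⟩ : LinearMap.ker β)
    hγ c hc
  intro v hv
  exact eq_zero_of_mul_dual_eq_zero hγH (comp_mem_polyFun (LinearMap.ker β).subtype hq)
    (fun w => h w w.2) ⟨v, hv⟩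

theorem eq_smul_prod_of_vanishes_on_kers {k : ℕ} (β : Fin k → Dual K V)
    (hβ : ∀ j, β j ≠ 0) (hprop : ∀ i j : Fin k, i ≠ j → ∀ c : K, β i ≠ c • β j)
    {f : V → K} (hf : f ∈ polyFun K V) (hhom : IsHomogeneousFun k f)
    (hvan : ∀ j v, β j v = 0 → f v = 0) : ∃ c : K, ∀ v, f v = c * ∏ j, β j v := by
  induction k generalizing f with
  | zero => exact ⟨f 0, fun v => by simpa using (hhom 0 v).symm⟩
  | succ k ih =>
    obtain ⟨g, hg, hfg⟩ := exists_eq_mul_of_vanishes_on_ker (hβ 0) hf (hvan 0)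
    have hgvan : ∀ j : Fin k, ∀ v, β j.succ v = 0 → g v = 0 := fun j =>
      vanishes_on_ker_of_mul_vanishes_on_ker (hprop 0 j.succ (Fin.succ_ne_zero j).symm) hg
        fun v hv => (hfg v).symm.trans (hvan j.succ v hv)
    obtain ⟨c, hc⟩ := ih (fun j => β j.succ) (fun j => hβ j.succ)
      (fun i j hij => hprop i.succ j.succ (Fin.succ_injective _ |>.ne hij)) hg
      (.of_mul_dual (hβ 0) hg hfg hhom) hgvan
    exact ⟨c, fun v => by rw [hfg, hc, Fin.prod_univ_succ]; ring⟩

end Product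

/-- With `β 1, …, β k` pairwise non-proportional nonzero linear forms
and `σ j` automorphisms fixing `ker (β j)` pointwise, any polynomial function `f`
on `V` that is homogeneous of degree `k` and satisfies `f ∘ σ j = -f` for all `j`
is a scalar multiple of the product `β 1 β 2 ⋯ β k`. -/
theorem eq_smul_prod_linearForms_of_anti_invariant_homogeneous
    {V : Type*} [AddCommGroup V] [Module ℂ V] [FiniteDimensional ℂ V]
    {k : ℕ} (β : Fin k → Module.Dual ℂ V) (hβ : ∀ j, β j ≠ 0)
    (hprop : ∀ i j : Fin k, i ≠ j → ∀ c : ℂ, β i ≠ c • β j)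
    (σ : Fin k → (V ≃ₗ[ℂ] V)) (hσ : ∀ j, ∀ v : V, β j v = 0 → σ j v = v)
    (f : V → ℂ)
    (hf : f ∈ Algebra.adjoin ℂ
      (Set.range fun φ : Module.Dual ℂ V => (φ : V → ℂ)))
    (hhom : ∀ (c : ℂ) (v : V), f (c • v) = c ^ k * f v)
    (hanti : ∀ j, ∀ v : V, f (σ j v) = - f v) :
    ∃ c : ℂ, ∀ v : V, f v = c * ∏ j, β j v := by
  have hvan : ∀ j v, β j v = 0 → f v = 0 := fun j v hv => by
    have := hanti j v
    rw [hσ j v hv] at this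
    linear_combination this / 2
  exact eq_smul_prod_of_vanishes_on_kers β hβ hprop hf hhom hvan
end

section
/- Let $V$ be a complex vector space of dimension $2\ell + 1$ equipped with a nondegenerate symmetric bilinear form $B$, and let $e$ be a nilpotent endomorphism of $V$ satisfying $B(e x, y) = -B(x, e y)$ for all $x, y \in V$. Suppose $V = U \oplus U' \oplus U''$, where: $U$ and $U'$ are $e$-invariant totally isotropic subspaces of dimension $\ell - m$ (for some $0 \le m \le \ell$); $U''$ is an $e$-invariant subspace of dimension $2m + 1$ on which $e$ acts with a single Jordan block (that is, $\ker(e|_{U''})$ is one-dimensional); and $B(u'', w) = 0$ for all $u'' \in U''$ and $w \in U \oplus U'$. Set $s = \dim \ker(e|_{U})$ and $r = \ell - s$. Then there exists a chain of totally isotropic subspaces $0 = U_0 \subseteq U_1 \subseteq \cdots \subseteq U_r$ of $V$ with $\dim U_i = i$ for all $i$, $e(U_i) \subseteq U_{i-1}$ for all $1 \le i \le r$, and $e(U_r^{\perp}) \subseteq U_r$, where $U_r^{\perp} = \{v \in V : B(v, u) = 0 \text{ for all } u \in U_r\}$. -/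
/-!
Put `X = e(U) + e^{m+1}(U'')`. The pieces are independent, and since `e` is a single nilpotent
Jordan block on `U''` (of size `2m+1`), `e^{m+1}(U'') = U'' ∩ ker e^m` has dimension `m`; so
`dim X = (ℓ - m - s) + m = r`. Skew-adjointness makes `X` totally isotropic: `B(e^{m+1}a, b) =
± B(a, e^{m+1}b) = 0` on `e^{m+1}(U'')`, and the other pairings vanish by the isotropy of `U` and
`U ⟂ U''`. If `v = u + u' + w ⟂ X`, skew-adjointness shows that `e u'` is orthogonal to `U`, and
`e^{m+1} w` to `U''`; both are then orthogonal to all of `V`, hence zero, and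
`e v = e u + e w ∈ e(U) + (U'' ∩ ker e^m) = X`. Finally, a nilpotent `e` preserving `X` admits a
complete flag of `X` that it lowers by one step; its members are isotropic as subspaces of `X`.
-/

open Module Submodule LinearMap

section Invariant

variable {R M : Type*} [Semiring R] [AddCommMonoid M] [Module R M] {f : Module.End R M}

theorem Submodule.map_pow_le_of_map_le {p : Submodule R M} (hp : p.map f ≤ p) (k : ℕ) :
    p.map (f ^ k) ≤ p := by
  induction k with
  | zero => simp [Module.End.one_eq_id]
  | succ k ih =>
    rw [pow_succ', Module.End.mul_eq_comp, map_comp]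
    exact (map_mono ih).trans hp

theorem Submodule.map_map_sup_map_pow_le {P Q : Submodule R M} (hP : P.map f ≤ P)
    (hQ : Q.map f ≤ Q) (k : ℕ) :
    (P.map f ⊔ Q.map (f ^ k)).map f ≤ P.map f ⊔ Q.map (f ^ k) := by
  rw [Submodule.map_sup]
  refine sup_le_sup (map_mono hP) ?_
  rw [← map_comp, ← Module.End.mul_eq_comp, ← pow_succ', pow_succ, Module.End.mul_eq_comp,
    map_comp]
  exact map_mono hQ

theorem Submodule.exists_mem_notMem_apply_mem (hf : IsNilpotent f) {X C : Submodule R M}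
    (hX : X.map f ≤ X) (hXC : ¬ X ≤ C) : ∃ y ∈ X, y ∉ C ∧ f y ∈ C := by
  by_contra! h
  have hpow (k : ℕ) : ∀ y ∈ X, y ∉ C → (f ^ k) y ∉ C := by
    induction k with
    | zero => simp
    | succ k ih =>
      intro y hy hyC
      rw [pow_succ, Module.End.mul_apply]
      exact ih (f y) (hX (mem_map_of_mem hy)) (h y hy hyC)
  obtain ⟨n, hn⟩ := hf
  obtain ⟨y, hy, hyC⟩ := SetLike.not_le_iff_exists.mp hXC
  exact hpow n y hy hyC (by simp [hn])

end Invariant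

section Nilpotent

variable {K V : Type*} [Field K] [AddCommGroup V] [Module K V] {f : Module.End K V}
  [FiniteDimensional K V] {p : Submodule K V}

theorem Submodule.finrank_map_add_finrank_inf_ker {W : Type*} [AddCommGroup W] [Module K W]
    (g : V →ₗ[K] W) (p : Submodule K V) :
    finrank K (p.map g) + finrank K (p ⊓ ker g : Submodule K V) = finrank K p := by
  rw [← (g.domRestrict p).finrank_range_add_finrank_ker, range_domRestrict, ker_domRestrict,
    ← finrank_map_subtype_eq p, map_comap_subtype]

theorem Submodule.le_ker_pow_finrank (hf : IsNilpotent f) (hp : p.map f ≤ p) :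
    p ≤ ker (f ^ finrank K p) := by
  replace hp := map_le_iff_le_comap.mp hp
  have hchar := (Module.End.isNilpotent.restrict hp hf).charpoly_eq_X_pow_finrank
  have hpow : (f.restrict hp) ^ finrank K p = 0 := by
    simpa [hchar] using (f.restrict hp).aeval_self_charpoly
  intro x hx
  rw [Module.End.pow_restrict] at hpow
  simpa using congr(($hpow ⟨x, hx⟩ : V))

theorem Submodule.finrank_inf_ker_pow_le (hp : p.map f ≤ p) (k : ℕ) :
    finrank K (p ⊓ ker (f ^ k) : Submodule K V) ≤
      k * finrank K (p ⊓ ker f : Submodule K V) := by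
  induction k with
  | zero => simp [Module.End.one_eq_id]
  | succ k ih =>
    set q : Submodule K V := p ⊓ ker (f ^ (k + 1))
    have hmap : q.map (f ^ k) ≤ p ⊓ ker f := by
      rintro _ ⟨x, ⟨hxp, hxk⟩, rfl⟩
      refine ⟨p.map_pow_le_of_map_le hp k (mem_map_of_mem hxp), ?_⟩
      simpa [mem_ker, ← Module.End.mul_apply, ← pow_succ'] using hxk
    have hker : q ⊓ ker (f ^ k) ≤ p ⊓ ker (f ^ k) := inf_le_inf_right _ inf_le_left
    have hrank := q.finrank_map_add_finrank_inf_ker (f ^ k)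
    have hmap' := finrank_mono hmap
    have hker' := finrank_mono hker
    rw [add_one_mul]
    omega

theorem Submodule.map_pow_le_inf_ker_pow (hf : IsNilpotent f) (hp : p.map f ≤ p) {a b : ℕ}
    (hab : a + b = finrank K p) : p.map (f ^ a) ≤ p ⊓ ker (f ^ b) := by
  rintro _ ⟨x, hx, rfl⟩
  refine ⟨p.map_pow_le_of_map_le hp a (mem_map_of_mem hx), mem_ker.mpr ?_⟩
  rw [← Module.End.mul_apply, ← pow_add, add_comm, hab]
  exact p.le_ker_pow_finrank hf hp hx

theorem Submodule.finrank_inf_ker_pow (hf : IsNilpotent f) (hp : p.map f ≤ p)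
    (hker : finrank K (p ⊓ ker f : Submodule K V) ≤ 1) {k : ℕ} (hk : k ≤ finrank K p) :
    finrank K (p ⊓ ker (f ^ k) : Submodule K V) = k := by
  have hle (j : ℕ) : finrank K (p ⊓ ker (f ^ j) : Submodule K V) ≤ j :=
    (p.finrank_inf_ker_pow_le hp j).trans (by simpa using Nat.mul_le_mul_left j hker)
  -- `f ^ (finrank p - k)` maps `p` into `p ⊓ ker (f ^ k)`, with an image of dimension `≥ k`
  have hmap := finrank_mono (p.map_pow_le_inf_ker_pow hf hp (Nat.sub_add_cancel hk))
  have hrank := p.finrank_map_add_finrank_inf_ker (f ^ (finrank K p - k))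
  have := hle (finrank K p - k)
  have := hle k
  omega

theorem Submodule.map_pow_eq_inf_ker_pow (hf : IsNilpotent f) (hp : p.map f ≤ p)
    (hker : finrank K (p ⊓ ker f : Submodule K V) ≤ 1) {a b : ℕ} (hab : a + b = finrank K p) :
    p.map (f ^ a) = p ⊓ ker (f ^ b) := by
  refine eq_of_le_of_finrank_le (p.map_pow_le_inf_ker_pow hf hp hab) ?_
  have hrank := p.finrank_map_add_finrank_inf_ker (f ^ a)
  rw [p.finrank_inf_ker_pow hf hp hker (k := a) (by omega)] at hrank
  rw [p.finrank_inf_ker_pow hf hp hker (k := b) (by omega)]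
  omega

theorem Submodule.finrank_map_sup_map_pow (hf : IsNilpotent f) {P Q : Submodule K V}
    (hP : P.map f ≤ P) (hQ : Q.map f ≤ Q) (hPQ : P ⊓ Q = ⊥)
    (hker : finrank K (Q ⊓ ker f : Submodule K V) ≤ 1) {a b : ℕ} (hab : a + b = finrank K Q) :
    finrank K (P.map f ⊔ Q.map (f ^ a) : Submodule K V) +
      finrank K (P ⊓ ker f : Submodule K V) = finrank K P + b := by
  have hdisj : P.map f ⊓ Q.map (f ^ a) = ⊥ :=
    eq_bot_iff.mpr (hPQ ▸ inf_le_inf hP (Q.map_pow_le_of_map_le hQ a))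
  have hb : finrank K (Q.map (f ^ a)) = b := by
    rw [Q.map_pow_eq_inf_ker_pow hf hQ hker hab, Q.finrank_inf_ker_pow hf hQ hker (by omega)]
  have hsum := finrank_sup_add_finrank_inf_eq (P.map f) (Q.map (f ^ a))
  have hrank := P.finrank_map_add_finrank_inf_ker f
  rw [hdisj, finrank_bot] at hsum
  omega

end Nilpotent

section LoweringFlag

variable {K V : Type*} [Field K] [AddCommGroup V] [Module K V] (f : Module.End K V)
  (X : Submodule K V)

open Classical in
/-- Stationary once no vector can be adjoined; for nilpotent `f` preserving `X` this happens
exactly from index `finrank X` on, where the flag equals `X`. -/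
noncomputable def loweringFlag : ℕ → Submodule K V
  | 0 => ⊥
  | k + 1 =>
    if h : ∃ y ∈ X, y ∉ loweringFlag k ∧ f y ∈ loweringFlag k then
      loweringFlag k ⊔ K ∙ h.choose
    else loweringFlag k

@[simp]
theorem loweringFlag_zero : loweringFlag f X 0 = ⊥ := rfl

theorem loweringFlag_le_succ (k : ℕ) : loweringFlag f X k ≤ loweringFlag f X (k + 1) := by
  rw [loweringFlag]
  split_ifs
  exacts [le_sup_left, le_rfl]

theorem loweringFlag_le (k : ℕ) : loweringFlag f X k ≤ X := by
  induction k with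
  | zero => exact bot_le
  | succ k ih =>
    rw [loweringFlag]
    split_ifs with h
    exacts [sup_le ih ((span_singleton_le_iff_mem _ _).mpr h.choose_spec.1), ih]

theorem map_loweringFlag_succ_le (k : ℕ) :
    (loweringFlag f X (k + 1)).map f ≤ loweringFlag f X k := by
  have step (k : ℕ) (hk : (loweringFlag f X k).map f ≤ loweringFlag f X k) :
      (loweringFlag f X (k + 1)).map f ≤ loweringFlag f X k := by
    rw [loweringFlag]
    split_ifs with h
    · rw [Submodule.map_sup, Submodule.map_span, Set.image_singleton, sup_le_iff,
        span_singleton_le_iff_mem]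
      exact ⟨hk, h.choose_spec.2.2⟩
    · exact hk
  refine step k ?_
  induction k with
  | zero => simp
  | succ k ih => exact (step k ih).trans (loweringFlag_le_succ f X k)

variable [FiniteDimensional K V] {f X}

theorem finrank_loweringFlag (hf : IsNilpotent f) (hX : X.map f ≤ X) {k : ℕ}
    (hk : k ≤ finrank K X) : finrank K (loweringFlag f X k) = k := by
  induction k with
  | zero => rw [loweringFlag_zero]; exact finrank_bot K V
  | succ k ih =>
    have hk' := ih (by omega)
    have hXC : ¬ X ≤ loweringFlag f X k := fun h => by
      have := finrank_mono h
      omega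
    have h := exists_mem_notMem_apply_mem hf hX hXC
    rw [loweringFlag, dif_pos h, finrank_sup_span_singleton h.choose_spec.2.1, hk']

theorem loweringFlag_finrank (hf : IsNilpotent f) (hX : X.map f ≤ X) :
    loweringFlag f X (finrank K X) = X :=
  eq_of_le_of_finrank_eq (loweringFlag_le f X _) (finrank_loweringFlag hf hX le_rfl)

end LoweringFlag

section Form

variable {K V : Type*} [CommRing K] [AddCommGroup V] [Module K V] (B : V →ₗ[K] V →ₗ[K] K)
  {e : Module.End K V}

def IsTotallyIsotropic (P : Submodule K V) : Prop :=
  ∀ x ∈ P, ∀ y ∈ P, B x y = 0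

variable {B}

theorem IsTotallyIsotropic.mono {P Q : Submodule K V} (hQ : IsTotallyIsotropic B Q)
    (hPQ : P ≤ Q) : IsTotallyIsotropic B P :=
  fun x hx y hy => hQ x (hPQ hx) y (hPQ hy)

theorem IsTotallyIsotropic.sup (hsymm : ∀ x y : V, B x y = B y x) {P Q : Submodule K V}
    (hP : IsTotallyIsotropic B P) (hQ : IsTotallyIsotropic B Q)
    (hPQ : ∀ x ∈ P, ∀ y ∈ Q, B x y = 0) : IsTotallyIsotropic B (P ⊔ Q) := by
  intro x hx y hy
  obtain ⟨a, ha, b, hb, rfl⟩ := mem_sup.mp hx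
  obtain ⟨a', ha', b', hb', rfl⟩ := mem_sup.mp hy
  simp only [map_add, LinearMap.add_apply, hP a ha a' ha', hQ b hb b' hb', hPQ a ha b' hb',
    hsymm b, hPQ a' ha' b hb, add_zero]

theorem apply_pow_apply_eq_neg_one_pow_mul (hskew : ∀ x y : V, B (e x) y = - B x (e y))
    (k : ℕ) (x y : V) : B ((e ^ k) x) y = (-1) ^ k * B x ((e ^ k) y) := by
  induction k generalizing x with
  | zero => simp
  | succ k ih =>
    rw [pow_succ, Module.End.mul_apply, ih, hskew, ← Module.End.mul_apply,
      (Commute.self_pow e k).eq]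
    ring

theorem le_ker_apply_pow_of_map_le_ker (hskew : ∀ x y : V, B (e x) y = - B x (e y))
    {P : Submodule K V} {v : V} (k : ℕ) (hv : P.map (e ^ k) ≤ ker (B v)) :
    P ≤ ker (B ((e ^ k) v)) := by
  intro z hz
  rw [mem_ker, apply_pow_apply_eq_neg_one_pow_mul hskew, hv (mem_map_of_mem hz), mul_zero]

theorem isTotallyIsotropic_map_pow (hskew : ∀ x y : V, B (e x) y = - B x (e y))
    {P : Submodule K V} {k : ℕ} (hP : P.map (e ^ k) ≤ ker (e ^ k)) :
    IsTotallyIsotropic B (P.map (e ^ k)) := by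
  rintro _ ⟨x, -, rfl⟩ y hy
  rw [apply_pow_apply_eq_neg_one_pow_mul hskew, hP hy, map_zero, mul_zero]

theorem apply_mem_of_le_ker (hsymm : ∀ x y : V, B x y = B y x)
    (hnd : ∀ x : V, (∀ y : V, B x y = 0) → x = 0)
    (hskew : ∀ x y : V, B (e x) y = - B x (e y)) {U U' U'' : Submodule K V}
    (hsup : U ⊔ U' ⊔ U'' = ⊤)
    (hUe : U.map e ≤ U) (hU'e : U'.map e ≤ U') (hU''e : U''.map e ≤ U'')
    (hUiso : IsTotallyIsotropic B U) (hU'iso : IsTotallyIsotropic B U')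
    (hperp : ∀ x ∈ U'', ∀ w ∈ U ⊔ U', B x w = 0) {k : ℕ} {v : V}
    (hv : U.map e ⊔ U''.map (e ^ (k + 1)) ≤ ker (B v)) :
    e v ∈ U.map e ⊔ U'' ⊓ ker (e ^ k) := by
  obtain ⟨_, hp, w, hw, rfl⟩ := mem_sup.mp (hsup.ge (mem_top (x := v)))
  obtain ⟨u, hu, u', hu', rfl⟩ := mem_sup.mp hp
  have eq_zero (y : V) (h : U ≤ ker (B y)) (h' : U' ≤ ker (B y)) (h'' : U'' ≤ ker (B y)) :
      y = 0 :=
    hnd y fun z => sup_le (sup_le h h') h'' (hsup.ge mem_top)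
  have hperp' (x : V) (hx : x ∈ U'') (w : V) (hw : w ∈ U ⊔ U') : B w x = 0 :=
    (hsymm w x).trans (hperp x hx w hw)
  obtain ⟨hvU, hvU''⟩ := sup_le_iff.mp hv
  have heu' : e u' ∈ U' := hU'e (mem_map_of_mem hu')
  have he_u' : e u' = 0 := by
    refine eq_zero _ (fun z hz => ?_) (hU'iso _ heu')
      (fun z hz => hperp' z hz _ (mem_sup_right heu'))
    have h := le_ker_apply_pow_of_map_le_ker hskew 1 (by rwa [pow_one]) hz
    simpa [hUiso _ (hUe (mem_map_of_mem hu)) z hz,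
      hperp _ (hU''e (mem_map_of_mem hw)) z (mem_sup_left hz)] using h
  have hpow (x : V) {P : Submodule K V} (hP : P.map e ≤ P) (hx : x ∈ P) :
      (e ^ (k + 1)) x ∈ P :=
    P.map_pow_le_of_map_le hP _ (mem_map_of_mem hx)
  have he_w : (e ^ (k + 1)) w = 0 := by
    refine eq_zero _ (fun z hz => hperp _ (hpow w hU''e hw) z (mem_sup_left hz))
      (fun z hz => hperp _ (hpow w hU''e hw) z (mem_sup_right hz)) (fun z hz => ?_)
    have h := le_ker_apply_pow_of_map_le_ker hskew (k + 1) hvU'' hz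
    simpa [hperp' z hz _ (mem_sup_left (hpow u hUe hu)),
      hperp' z hz _ (mem_sup_right (hpow u' hU'e hu'))] using h
  rw [map_add, map_add, he_u', add_zero]
  refine add_mem (mem_sup_left (mem_map_of_mem hu))
    (mem_sup_right ⟨hU''e (mem_map_of_mem hw), ?_⟩)
  rw [SetLike.mem_coe, mem_ker, ← Module.End.mul_apply, ← pow_succ]
  exact he_w

theorem isTotallyIsotropic_map_sup_map_pow (hsymm : ∀ x y : V, B x y = B y x)
    (hskew : ∀ x y : V, B (e x) y = - B x (e y)) {U U'' : Submodule K V}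
    (hUiso : IsTotallyIsotropic B U) (hUe : U.map e ≤ U) (hU''e : U''.map e ≤ U'')
    (hperp : ∀ x ∈ U'', ∀ w ∈ U, B x w = 0) {k : ℕ}
    (hk : U''.map (e ^ (k + 1)) ≤ ker (e ^ k)) :
    IsTotallyIsotropic B (U.map e ⊔ U''.map (e ^ (k + 1))) := by
  have hk' : U''.map (e ^ (k + 1)) ≤ ker (e ^ (k + 1)) := by
    rw [pow_succ', Module.End.mul_eq_comp] at hk ⊢
    exact hk.trans (ker_le_ker_comp _ _)
  exact (hUiso.mono hUe).sup hsymm (isTotallyIsotropic_map_pow hskew hk') fun x hx y hy =>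
    (hsymm x y).trans (hperp y (U''.map_pow_le_of_map_le hU''e _ hy) x (hUe hx))

end Form

theorem exists_isotropic_flag_typeB_general
    {V : Type*} [AddCommGroup V] [Module ℂ V] [FiniteDimensional ℂ V]
    {ℓ m : ℕ} (hdim : Module.finrank ℂ V = 2 * ℓ + 1)
    (B : V →ₗ[ℂ] V →ₗ[ℂ] ℂ)
    (hsymm : ∀ x y : V, B x y = B y x)
    (hnd : ∀ x : V, (∀ y : V, B x y = 0) → x = 0)
    (e : V →ₗ[ℂ] V) (he : IsNilpotent e)
    (hskew : ∀ x y : V, B (e x) y = - B x (e y))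
    (U U' U'' : Submodule ℂ V)
    (hsup : U ⊔ U' ⊔ U'' = ⊤)
    (hU : Module.finrank ℂ U = ℓ - m) (hU' : Module.finrank ℂ U' = ℓ - m)
    (hU'' : Module.finrank ℂ U'' = 2 * m + 1)
    (hUe : Submodule.map e U ≤ U) (hU'e : Submodule.map e U' ≤ U')
    (hU''e : Submodule.map e U'' ≤ U'')
    (hUiso : ∀ x ∈ U, ∀ y ∈ U, B x y = 0)
    (hU'iso : ∀ x ∈ U', ∀ y ∈ U', B x y = 0)
    (hJordan : Module.finrank ℂ (U'' ⊓ LinearMap.ker e : Submodule ℂ V) = 1)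
    (hperp : ∀ x ∈ U'', ∀ w ∈ U ⊔ U', B x w = 0)
    {s r : ℕ} (hs : Module.finrank ℂ (U ⊓ LinearMap.ker e : Submodule ℂ V) = s)
    (hrs : r = ℓ - s) :
    ∃ C : ℕ → Submodule ℂ V,
      C 0 = ⊥ ∧
      (∀ i : ℕ, i < r → C i ≤ C (i + 1)) ∧
      (∀ i : ℕ, i ≤ r → Module.finrank ℂ (C i) = i) ∧
      (∀ i : ℕ, i ≤ r → ∀ x ∈ C i, ∀ y ∈ C i, B x y = 0) ∧
      (∀ i : ℕ, 1 ≤ i → i ≤ r → Submodule.map e (C i) ≤ C (i - 1)) ∧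
      (∀ v : V, (∀ u ∈ C r, B v u = 0) → e v ∈ C r) := by
  have hm : m ≤ ℓ := by
    have := U''.finrank_le
    omega
  have hindep : U ⊓ U'' = ⊥ := by
    have h₁ := finrank_sup_add_finrank_inf_eq U U'
    have h₂ := finrank_sup_add_finrank_inf_eq (U ⊔ U') U''
    have h₃ := finrank_mono (inf_le_inf_right U'' (le_sup_left : U ≤ U ⊔ U'))
    rw [hsup, finrank_top] at h₂
    exact finrank_eq_zero.mp (by omega)
  have hY : U''.map (e ^ (m + 1)) = U'' ⊓ ker (e ^ m) :=
    U''.map_pow_eq_inf_ker_pow he hU''e hJordan.le (by omega)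
  have hXr : finrank ℂ (U.map e ⊔ U''.map (e ^ (m + 1)) : Submodule ℂ V) = r := by
    have hsum := U.finrank_map_sup_map_pow he hUe hU''e hindep hJordan.le (a := m + 1) (b := m)
      (by omega)
    have hker := finrank_mono (inf_le_left : U ⊓ ker e ≤ U)
    omega
  set X := U.map e ⊔ U''.map (e ^ (m + 1))
  have hXe : X.map e ≤ X := map_map_sup_map_pow_le hUe hU''e _
  have hXiso : IsTotallyIsotropic B X :=
    isTotallyIsotropic_map_sup_map_pow hsymm hskew hUiso hUe hU''e
      (fun x hx w hw => hperp x hx w (mem_sup_left hw)) (hY.trans_le inf_le_right)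
  refine ⟨loweringFlag e X, rfl, fun i _ => loweringFlag_le_succ e X i,
    fun i hi => finrank_loweringFlag he hXe (hXr ▸ hi),
    fun i _ => hXiso.mono (loweringFlag_le e X i), fun i hi _ => ?_, ?_⟩
  · obtain ⟨j, rfl⟩ : ∃ j, i = j + 1 := ⟨i - 1, by omega⟩
    exact map_loweringFlag_succ_le e X j
  · rw [← hXr, loweringFlag_finrank he hXe]
    intro v hv
    simpa [X, hY] using
      apply_mem_of_le_ker hsymm hnd hskew hsup hUe hU'e hU''e hUiso hU'iso hperp hv

/-- type B: Let `V` be a `(2ℓ+1)`-dimensional complex vector space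
with a nondegenerate symmetric bilinear form `B`, and let `e` be a nilpotent
endomorphism with `B (e x) y = - B x (e y)`. Given a decomposition
`V = U ⊕ U' ⊕ U''` as in the statement (with `U, U'` `e`-invariant totally
isotropic of dimension `ℓ - m`, `U''` `e`-invariant of dimension `2m+1` with a
single Jordan block, perpendicular to `U ⊕ U'`), and with
`s = dim ker (e|_U)`, `r = ℓ - s`, there is a chain of totally isotropic subspaces
`0 = C 0 ⊆ ⋯ ⊆ C r` with `dim (C i) = i`, `e (C i) ⊆ C (i-1)`, and
`e ((C r)^⊥) ⊆ C r`. -/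
theorem exists_isotropic_flag_typeB
    {V : Type*} [AddCommGroup V] [Module ℂ V] [FiniteDimensional ℂ V]
    {ℓ m : ℕ} (hm : m ≤ ℓ) (hdim : Module.finrank ℂ V = 2 * ℓ + 1)
    (B : V →ₗ[ℂ] V →ₗ[ℂ] ℂ)
    (hsymm : ∀ x y : V, B x y = B y x)
    (hnd : ∀ x : V, (∀ y : V, B x y = 0) → x = 0)
    (e : V →ₗ[ℂ] V) (he : IsNilpotent e)
    (hskew : ∀ x y : V, B (e x) y = - B x (e y))
    (U U' U'' : Submodule ℂ V)
    (hsup : U ⊔ U' ⊔ U'' = ⊤)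
    (hU : Module.finrank ℂ U = ℓ - m) (hU' : Module.finrank ℂ U' = ℓ - m)
    (hU'' : Module.finrank ℂ U'' = 2 * m + 1)
    (hUe : Submodule.map e U ≤ U) (hU'e : Submodule.map e U' ≤ U')
    (hU''e : Submodule.map e U'' ≤ U'')
    (hUiso : ∀ x ∈ U, ∀ y ∈ U, B x y = 0)
    (hU'iso : ∀ x ∈ U', ∀ y ∈ U', B x y = 0)
    (hJordan : Module.finrank ℂ (U'' ⊓ LinearMap.ker e : Submodule ℂ V) = 1)
    (hperp : ∀ x ∈ U'', ∀ w ∈ U ⊔ U', B x w = 0)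
    {s r : ℕ} (hs : Module.finrank ℂ (U ⊓ LinearMap.ker e : Submodule ℂ V) = s)
    (hrs : r = ℓ - s) :
    ∃ C : ℕ → Submodule ℂ V,
      C 0 = ⊥ ∧
      (∀ i : ℕ, i < r → C i ≤ C (i + 1)) ∧
      (∀ i : ℕ, i ≤ r → Module.finrank ℂ (C i) = i) ∧
      (∀ i : ℕ, i ≤ r → ∀ x ∈ C i, ∀ y ∈ C i, B x y = 0) ∧
      (∀ i : ℕ, 1 ≤ i → i ≤ r → Submodule.map e (C i) ≤ C (i - 1)) ∧
      (∀ v : V, (∀ u ∈ C r, B v u = 0) → e v ∈ C r) :=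
  exists_isotropic_flag_typeB_general hdim B hsymm hnd e he hskew U U' U'' hsup hU hU' hU'' hUe hU'e
    hU''e hUiso hU'iso hJordan hperp hs hrs
end

section
/- Let $V$ be a complex vector space of dimension $2\ell$ equipped with a nondegenerate alternating (symplectic) bilinear form $B$, and let $e$ be a nilpotent endomorphism of $V$ satisfying $B(e x, y) = -B(x, e y)$ for all $x, y \in V$. Suppose $V = U \oplus U' \oplus U''$, where: $U$ and $U'$ are $e$-invariant totally isotropic subspaces of dimension $\ell - m$ (for some $0 \le m \le \ell$); $U''$ is an $e$-invariant subspace of dimension $2m$ on which $e$ acts with a single Jordan block (that is, $\ker(e|_{U''})$ is one-dimensional, with the convention that $U''$ may be zero when $m = 0$); and $B(u'', w) = 0$ for all $u'' \in U''$ and $w \in U \oplus U'$. Set $s = \dim \ker(e|_{U})$ and $r = \ell - s$. Then there exists a chain of totally isotropic subspaces $0 = U_0 \subseteq U_1 \subseteq \cdots \subseteq U_r$ of $V$ with $\dim U_i = i$ for all $i$, $e(U_i) \subseteq U_{i-1}$ for all $1 \le i \le r$, and $e(U_r^{\perp}) \subseteq U_r$, where $U_r^{\perp} = \{v \in V : B(v,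 u) = 0 \text{ for all } u \in U_r\}$. -/
/-!
Counting dimensions, the sum `U + U' + U''` is direct. On the single Jordan block `U''` of
size `2m`, `L = e^m U'' = U'' ∩ ker e^m` is a Lagrangian, and `C = e U ⊕ L` is an `e`-stable
totally isotropic subspace of dimension `(ℓ - m - s) + m = r`. If `v = b + b' + c` is orthogonal
to `C`, then `c` is orthogonal to `L`, hence lies in `L`, and `e b'` pairs to zero with `U`
(as `b'` is orthogonal to `e U`), with `U'` and with `U''`, hence vanishes; so
`e v = e b + e c ∈ C`. Finally, a nilpotent `e` acting on an invariant subspace lowers some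
complete flag of it by one step, and such a flag of `C` is the required chain.
-/

open Module Submodule

namespace Submodule

section Semiring

variable {R M : Type*} [Semiring R] [AddCommMonoid M] [Module R M] {e : M →ₗ[R] M}
  {W : Submodule R M}

theorem map_pow_succ (e : M →ₗ[R] M) (W : Submodule R M) (k : ℕ) :
    W.map (e ^ (k + 1)) = (W.map (e ^ k)).map e := by
  rw [pow_succ', Module.End.mul_eq_comp, map_comp]

theorem map_pow_le_of_map_le_s13 (hW : W.map e ≤ W) (k : ℕ) : W.map (e ^ k) ≤ W := by
  induction k with
  | zero => simp [Module.End.one_eq_id]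
  | succ k ih => exact (map_pow_succ e W k).le.trans ((map_mono ih).trans hW)

theorem map_map_pow_le_of_map_le (hW : W.map e ≤ W) (k : ℕ) :
    (W.map (e ^ k)).map e ≤ W.map (e ^ k) := by
  rw [← map_pow_succ, pow_succ, Module.End.mul_eq_comp, map_comp]
  exact map_mono hW

theorem map_lt_of_isNilpotent (he : IsNilpotent e) (hW : W.map e ≤ W) (hW₀ : W ≠ ⊥) :
    W.map e < W := by
  refine hW.lt_of_ne fun h => hW₀ ?_
  obtain ⟨n, hn⟩ := he
  have hpow : ∀ k : ℕ, W.map (e ^ k) = W := by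
    intro k
    induction k with
    | zero => simp [Module.End.one_eq_id]
    | succ k ih => rw [map_pow_succ, ih, h]
  simpa [hn] using (hpow n).symm

end Semiring

variable {K V : Type*} [Field K] [AddCommGroup V] [Module K V] [FiniteDimensional K V]

theorem finrank_map_add_finrank_inf_ker_s13 {V₂ : Type*} [AddCommGroup V₂] [Module K V₂]
    (f : V →ₗ[K] V₂) (W : Submodule K V) :
    finrank K (W.map f) + finrank K ↥(W ⊓ LinearMap.ker f) = finrank K W := by
  have h := LinearMap.finrank_range_add_finrank_ker (f.domRestrict W)
  have hker : LinearMap.ker (f.domRestrict W) = (W ⊓ LinearMap.ker f).comap W.subtype := by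
    ext x
    simp
  rwa [LinearMap.range_domRestrict, hker, (comapSubtypeEquivOfLe inf_le_left).finrank_eq] at h

theorem finrank_sup_eq_add_of_le {P Q P' Q' : Submodule K V} (hPQ : P ⊔ Q = ⊤)
    (hdim : finrank K P + finrank K Q ≤ finrank K V) (hP' : P' ≤ P) (hQ' : Q' ≤ Q) :
    finrank K ↥(P' ⊔ Q') = finrank K P' + finrank K Q' := by
  have h := finrank_sup_add_finrank_inf_eq P Q
  rw [hPQ, finrank_top] at h
  have hPQ_inf : P ⊓ Q = ⊥ := finrank_eq_zero.mp (by omega)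
  have h' := finrank_sup_add_finrank_inf_eq P' Q'
  have hPQ'_inf : P' ⊓ Q' = ⊥ := eq_bot_iff.mpr (hPQ_inf ▸ inf_le_inf hP' hQ')
  rwa [hPQ'_inf, finrank_bot, add_zero] at h'

theorem exists_le_le_finrank_eq {P W : Submodule K V} (hPW : P ≤ W) {k : ℕ}
    (hPk : finrank K P ≤ k) (hkW : k ≤ finrank K W) :
    ∃ Q : Submodule K V, P ≤ Q ∧ Q ≤ W ∧ finrank K Q = k := by
  induction k with
  | zero => exact ⟨P, le_rfl, hPW, by omega⟩
  | succ k ih =>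
    rcases hPk.eq_or_lt with hPk | hPk
    · exact ⟨P, le_rfl, hPW, hPk⟩
    obtain ⟨Q, hPQ, hQW, hQk⟩ := ih (by omega) (by omega)
    obtain ⟨x, hxW, hxQ⟩ := SetLike.exists_of_lt <|
      lt_of_le_of_ne hQW fun h => by rw [h] at hQk; omega
    refine ⟨Q ⊔ K ∙ x, le_sup_of_le_left hPQ,
      sup_le hQW ((span_singleton_le_iff_mem x W).mpr hxW), ?_⟩
    rw [finrank_sup_span_singleton hxQ, hQk]

variable {e : V →ₗ[K] V} {W : Submodule K V}

theorem exists_flag_of_isNilpotent (he : IsNilpotent e) (hW : W.map e ≤ W) :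
    ∃ C : ℕ → Submodule K V, Monotone C ∧ C 0 = ⊥ ∧ C (finrank K W) = W ∧
      (∀ i ≤ finrank K W, finrank K (C i) = i) ∧ ∀ i, (C (i + 1)).map e ≤ C i := by
  induction hn : finrank K W generalizing W with
  | zero =>
    refine ⟨fun _ => ⊥, monotone_const, rfl, (finrank_eq_zero.mp hn).symm, fun i hi => ?_,
      fun _ => (map_bot e).le⟩
    rw [Nat.le_zero.mp hi, finrank_bot]
  | succ n ih =>
    have hlt : W.map e < W :=
      map_lt_of_isNilpotent he hW fun h => by rw [h, finrank_bot] at hn; omega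
    -- a flag of a hyperplane `Q` of `W` containing `e W` is extended by `W` itself
    obtain ⟨Q, hQe, hQW, hQn⟩ := exists_le_le_finrank_eq hlt.le
      (by have := finrank_lt_finrank_of_lt hlt; omega) (k := n) (by omega)
    obtain ⟨C, hCmono, hC0, hCn, hCdim, hCe⟩ := ih ((map_mono hQW).trans hQe) hQn
    set C' : ℕ → Submodule K V := fun i => if i ≤ n then C i else W
    have hC'_le {i : ℕ} (hi : i ≤ n) : C' i = C i := if_pos hi
    have hC'_gt {i : ℕ} (hi : n < i) : C' i = W := if_neg (by omega)
    refine ⟨C', monotone_nat_of_le_succ fun i => ?_, hC'_le (Nat.zero_le n) ▸ hC0,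
      hC'_gt (Nat.lt_succ_self n), fun i hi => ?_, fun i => ?_⟩
    · rcases Nat.lt_trichotomy i n with hi | rfl | hi
      · rw [hC'_le hi.le, hC'_le hi]
        exact hCmono (Nat.le_succ i)
      · rw [hC'_le le_rfl, hC'_gt (Nat.lt_succ_self i), hCn]
        exact hQW
      · rw [hC'_gt hi, hC'_gt (by omega)]
    · rcases hi.lt_or_eq with hi | rfl
      · rw [hC'_le (Nat.lt_succ_iff.mp hi), hCdim i (Nat.lt_succ_iff.mp hi)]
      · rw [hC'_gt (Nat.lt_succ_self n), hn]
    · rcases Nat.lt_trichotomy i n with hi | rfl | hi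
      · rw [hC'_le hi, hC'_le hi.le]
        exact hCe i
      · rw [hC'_le le_rfl, hC'_gt (Nat.lt_succ_self i), hCn]
        exact hQe
      · rw [hC'_gt hi, hC'_gt (by omega)]
        exact hW

theorem finrank_map_eq_sub_one (he : IsNilpotent e) (hW : W.map e ≤ W)
    (hker : finrank K ↥(W ⊓ LinearMap.ker e) ≤ 1) :
    finrank K (W.map e) = finrank K W - 1 := by
  have := finrank_map_add_finrank_inf_ker_s13 e W
  rcases eq_or_ne W ⊥ with rfl | hW₀
  · simp
  · have := finrank_lt_finrank_of_lt (map_lt_of_isNilpotent he hW hW₀)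
    omega

theorem finrank_map_pow_eq_sub (he : IsNilpotent e) (hW : W.map e ≤ W)
    (hker : finrank K ↥(W ⊓ LinearMap.ker e) ≤ 1) (k : ℕ) :
    finrank K (W.map (e ^ k)) = finrank K W - k := by
  induction k with
  | zero => rw [pow_zero, Module.End.one_eq_id, map_id, Nat.sub_zero]
  | succ k ih =>
    have hker_k : finrank K ↥(W.map (e ^ k) ⊓ LinearMap.ker e) ≤ 1 :=
      (finrank_mono (inf_le_inf_right _ (map_pow_le_of_map_le_s13 hW k))).trans hker
    rw [map_pow_succ, finrank_map_eq_sub_one he (map_map_pow_le_of_map_le hW k) hker_k, ih]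
    omega

theorem map_pow_eq_inf_ker_pow_s13 (he : IsNilpotent e) (hW : W.map e ≤ W)
    (hker : finrank K ↥(W ⊓ LinearMap.ker e) ≤ 1) {k j : ℕ} (hkj : finrank K W = k + j) :
    W.map (e ^ k) = W ⊓ LinearMap.ker (e ^ j) := by
  have hzero : W.map (e ^ (j + k)) = ⊥ := by
    rw [← finrank_eq_zero, finrank_map_pow_eq_sub he hW hker]
    omega
  refine eq_of_le_of_finrank_eq (le_inf (map_pow_le_of_map_le_s13 hW k) ?_) ?_
  · rw [map_le_iff_le_comap]
    intro x hx
    have : (e ^ (j + k)) x ∈ W.map (e ^ (j + k)) := mem_map_of_mem hx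
    rwa [hzero, mem_bot, pow_add, Module.End.mul_apply] at this
  · have := finrank_map_add_finrank_inf_ker_s13 (e ^ j) W
    rw [finrank_map_pow_eq_sub he hW hker] at this ⊢
    omega

end Submodule

namespace LinearMap

section CommRing

variable {R M : Type*} [CommRing R] [AddCommGroup M] [Module R M] {B : M →ₗ[R] M →ₗ[R] R}

def IsTotallyIsotropic (B : M →ₗ[R] M →ₗ[R] R) (W : Submodule R M) : Prop :=
  ∀ x ∈ W, ∀ y ∈ W, B x y = 0

/-- When `B` is nondegenerate on `W`, this says that `L` is a Lagrangian subspace of `W`. -/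
structure IsLagrangianIn (B : M →ₗ[R] M →ₗ[R] R) (W L : Submodule R M) : Prop where
  le : L ≤ W
  isTotallyIsotropic : B.IsTotallyIsotropic L
  mem_of_forall_apply_eq_zero : ∀ c ∈ W, (∀ l ∈ L, B c l = 0) → c ∈ L

theorem IsTotallyIsotropic.mono {W W' : Submodule R M} (hW : B.IsTotallyIsotropic W)
    (hW' : W' ≤ W) : B.IsTotallyIsotropic W' :=
  fun x hx y hy => hW x (hW' hx) y (hW' hy)

theorem IsTotallyIsotropic.sup (hB : B.IsAlt) {P Q : Submodule R M}
    (hP : B.IsTotallyIsotropic P) (hQ : B.IsTotallyIsotropic Q)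
    (hPQ : ∀ x ∈ P, ∀ y ∈ Q, B x y = 0) : B.IsTotallyIsotropic (P ⊔ Q) := by
  intro x hx y hy
  obtain ⟨p, hp, q, hq, rfl⟩ := Submodule.mem_sup.mp hx
  obtain ⟨p', hp', q', hq', rfl⟩ := Submodule.mem_sup.mp hy
  simp only [map_add, add_apply, hP p hp p' hp', hPQ p hp q' hq', hB.eq_iff.mp (hPQ p' hp' q hq),
    hQ q hq q' hq', add_zero]

theorem SeparatingLeft.eq_zero_of_sup_eq_top (hnd : B.SeparatingLeft) {P Q : Submodule R M}
    (hPQ : P ⊔ Q = ⊤) {x : M} (hP : ∀ y ∈ P, B x y = 0) (hQ : ∀ y ∈ Q, B x y = 0) :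
    x = 0 := by
  have hker : P ⊔ Q ≤ ker (B x) := sup_le (fun y hy => hP y hy) (fun y hy => hQ y hy)
  exact hnd x fun y => hker (hPQ ▸ Submodule.mem_top)

variable {e : M →ₗ[R] M}

theorem apply_pow_apply_eq_neg_one_pow_mul (hskew : ∀ x y, B (e x) y = -B x (e y)) (k : ℕ)
    (x y : M) : B ((e ^ k) x) y = (-1) ^ k * B x ((e ^ k) y) := by
  induction k generalizing x with
  | zero => simp
  | succ k ih =>
    rw [pow_succ, Module.End.mul_apply, ih, hskew, ← Module.End.mul_apply e, ← pow_succ',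
      pow_succ]
    ring

variable {U U' W L : Submodule R M}

theorem apply_eq_zero_of_forall_apply_map_eq_zero (hB : B.IsAlt) (hnd : B.SeparatingLeft)
    (hskew : ∀ x y, B (e x) y = -B x (e y)) (hsup : U ⊔ U' ⊔ W = ⊤) (hU'e : U'.map e ≤ U')
    (hU'iso : B.IsTotallyIsotropic U') (hperp : ∀ x ∈ W, ∀ w ∈ U ⊔ U', B x w = 0) {b : M}
    (hb : b ∈ U') (hbU : ∀ u ∈ U, B b (e u) = 0) : e b = 0 := by
  have heb : e b ∈ U' := hU'e (Submodule.mem_map_of_mem hb)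
  refine hnd.eq_zero_of_sup_eq_top hsup (fun y hy => ?_)
    (fun y hy => hB.eq_iff.mp (hperp y hy _ (Submodule.mem_sup_right heb)))
  obtain ⟨u, hu, u', hu', rfl⟩ := Submodule.mem_sup.mp hy
  rw [map_add, hskew, hbU u hu, hU'iso _ heb u' hu', neg_zero, add_zero]

theorem apply_mem_map_sup_of_forall_apply_eq_zero (hB : B.IsAlt) (hnd : B.SeparatingLeft)
    (hskew : ∀ x y, B (e x) y = -B x (e y)) (hsup : U ⊔ U' ⊔ W = ⊤) (hUe : U.map e ≤ U)
    (hU'e : U'.map e ≤ U') (hUiso : B.IsTotallyIsotropic U) (hU'iso : B.IsTotallyIsotropic U')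
    (hperp : ∀ x ∈ W, ∀ w ∈ U ⊔ U', B x w = 0) (hL : B.IsLagrangianIn W L)
    (hLe : L.map e ≤ L) {v : M} (hv : ∀ u ∈ U.map e ⊔ L, B v u = 0) :
    e v ∈ U.map e ⊔ L := by
  obtain ⟨p, hp, c, hc, rfl⟩ := Submodule.mem_sup.mp (hsup ▸ Submodule.mem_top (x := v))
  obtain ⟨b, hb, b', hb', rfl⟩ := Submodule.mem_sup.mp hp
  have hW_perp {x w : M} (hx : x ∈ W) (hw : w ∈ U ⊔ U') : B w x = 0 :=
    hB.eq_iff.mp (hperp x hx w hw)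
  have hcL : c ∈ L := by
    refine hL.mem_of_forall_apply_eq_zero c hc fun l hl => ?_
    have := hv l (Submodule.mem_sup_right hl)
    rwa [map_add, map_add, add_apply, add_apply, hW_perp (hL.le hl) (Submodule.mem_sup_left hb),
      hW_perp (hL.le hl) (Submodule.mem_sup_right hb'), zero_add, zero_add] at this
  have heb' : e b' = 0 := by
    refine apply_eq_zero_of_forall_apply_map_eq_zero hB hnd hskew hsup hU'e hU'iso hperp hb'
      fun u hu => ?_
    have heu : e u ∈ U := hUe (Submodule.mem_map_of_mem hu)
    have := hv (e u) (Submodule.mem_sup_left (Submodule.mem_map_of_mem hu))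
    rwa [map_add, map_add, add_apply, add_apply, hUiso b hb _ heu,
      hperp c hc _ (Submodule.mem_sup_left heu), zero_add, add_zero] at this
  rw [map_add, map_add, heb', add_zero]
  exact Submodule.add_mem_sup (Submodule.mem_map_of_mem hb) (hLe (Submodule.mem_map_of_mem hcL))

end CommRing

variable {K V : Type*} [Field K] [AddCommGroup V] [Module K V] [FiniteDimensional K V]
  {B : V →ₗ[K] V →ₗ[K] K} {e : V →ₗ[K] V} {W : Submodule K V} {m : ℕ}

/-- `hker` says that `e` acts on `W` by a single Jordan block, so that `e^m W = W ⊓ ker e^m`. -/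
theorem isLagrangianIn_map_pow (hskew : ∀ x y, B (e x) y = -B x (e y)) (he : IsNilpotent e)
    (hW : W.map e ≤ W) (hker : finrank K ↥(W ⊓ ker e) ≤ 1) (hdim : finrank K W = m + m)
    (hnd : ∀ x ∈ W, (∀ y ∈ W, B x y = 0) → x = 0) :
    B.IsLagrangianIn W (W.map (e ^ m)) := by
  have hL := Submodule.map_pow_eq_inf_ker_pow_s13 he hW hker hdim
  refine ⟨Submodule.map_pow_le_of_map_le_s13 hW m, ?_, fun c hc hcL => ?_⟩
  · rintro _ ⟨a, -, rfl⟩ y hy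
    rw [hL] at hy
    rw [apply_pow_apply_eq_neg_one_pow_mul hskew, mem_ker.mp hy.2, map_zero, mul_zero]
  · rw [hL]
    refine ⟨hc, hnd _ (Submodule.map_pow_le_of_map_le_s13 hW m (Submodule.mem_map_of_mem hc)) ?_⟩
    intro y hy
    rw [apply_pow_apply_eq_neg_one_pow_mul hskew, hcL _ (Submodule.mem_map_of_mem hy), mul_zero]

end LinearMap

/-- type C: Let `V` be a `2ℓ`-dimensional complex vector space with
a nondegenerate alternating (symplectic) bilinear form `B`, and let `e` be a
nilpotent endomorphism with `B (e x) y = - B x (e y)`. Given a decomposition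
`V = U ⊕ U' ⊕ U''` as in the statement (with `U, U'` `e`-invariant totally
isotropic of dimension `ℓ - m`, `U''` `e`-invariant of dimension `2m` with a
single Jordan block — possibly zero when `m = 0` —, perpendicular to `U ⊕ U'`),
and with `s = dim ker (e|_U)`, `r = ℓ - s`, there is a chain of totally isotropic
subspaces `0 = C 0 ⊆ ⋯ ⊆ C r` with `dim (C i) = i`, `e (C i) ⊆ C (i-1)`, and
`e ((C r)^⊥) ⊆ C r`. -/
theorem exists_isotropic_flag_typeC
    {V : Type*} [AddCommGroup V] [Module ℂ V] [FiniteDimensional ℂ V]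
    {ℓ m : ℕ} (hm : m ≤ ℓ) (hdim : Module.finrank ℂ V = 2 * ℓ)
    (B : V →ₗ[ℂ] V →ₗ[ℂ] ℂ)
    (halt : ∀ x : V, B x x = 0)
    (hnd : ∀ x : V, (∀ y : V, B x y = 0) → x = 0)
    (e : V →ₗ[ℂ] V) (he : IsNilpotent e)
    (hskew : ∀ x y : V, B (e x) y = - B x (e y))
    (U U' U'' : Submodule ℂ V)
    (hsup : U ⊔ U' ⊔ U'' = ⊤)
    (hU : Module.finrank ℂ U = ℓ - m) (hU' : Module.finrank ℂ U' = ℓ - m)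
    (hU'' : Module.finrank ℂ U'' = 2 * m)
    (hUe : Submodule.map e U ≤ U) (hU'e : Submodule.map e U' ≤ U')
    (hU''e : Submodule.map e U'' ≤ U'')
    (hUiso : ∀ x ∈ U, ∀ y ∈ U, B x y = 0)
    (hU'iso : ∀ x ∈ U', ∀ y ∈ U', B x y = 0)
    (hJordan : U'' = ⊥ ∨
      Module.finrank ℂ (U'' ⊓ LinearMap.ker e : Submodule ℂ V) = 1)
    (hperp : ∀ x ∈ U'', ∀ w ∈ U ⊔ U', B x w = 0)
    {s r : ℕ} (hs : Module.finrank ℂ (U ⊓ LinearMap.ker e : Submodule ℂ V) = s)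
    (hrs : r = ℓ - s) :
    ∃ C : ℕ → Submodule ℂ V,
      C 0 = ⊥ ∧
      (∀ i : ℕ, i < r → C i ≤ C (i + 1)) ∧
      (∀ i : ℕ, i ≤ r → Module.finrank ℂ (C i) = i) ∧
      (∀ i : ℕ, i ≤ r → ∀ x ∈ C i, ∀ y ∈ C i, B x y = 0) ∧
      (∀ i : ℕ, 1 ≤ i → i ≤ r → Submodule.map e (C i) ≤ C (i - 1)) ∧
      (∀ v : V, (∀ u ∈ C r, B v u = 0) → e v ∈ C r) := by
  have hB : B.IsAlt := halt
  have hker : finrank ℂ ↥(U'' ⊓ LinearMap.ker e) ≤ 1 :=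
    hJordan.elim (fun h => by rw [h, bot_inf_eq, finrank_bot]; exact zero_le_one) (·.le)
  have hL : B.IsLagrangianIn U'' (U''.map (e ^ m)) :=
    LinearMap.isLagrangianIn_map_pow hskew he hU''e hker (by omega) fun x hx hxU'' =>
      LinearMap.SeparatingLeft.eq_zero_of_sup_eq_top hnd hsup (hperp x hx) hxU''
  have hLe := map_map_pow_le_of_map_le hU''e m
  set C := U.map e ⊔ U''.map (e ^ m)
  have hCdim : finrank ℂ C = r := by
    have := finrank_add_le_finrank_add_finrank U U'
    have := finrank_map_add_finrank_inf_ker_s13 e U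
    rw [finrank_sup_eq_add_of_le hsup (by omega) (hUe.trans le_sup_left) hL.le,
      finrank_map_pow_eq_sub he hU''e hker]
    omega
  have hCe : C.map e ≤ C := (Submodule.map_sup _ _ e).trans_le (sup_le_sup (map_mono hUe) hLe)
  have hCiso : B.IsTotallyIsotropic C :=
    (LinearMap.IsTotallyIsotropic.mono hUiso hUe).sup hB hL.isTotallyIsotropic
      fun x hx y hy => hB.eq_iff.mp (hperp y (hL.le hy) x (mem_sup_left (hUe hx)))
  obtain ⟨F, hFmono, hF0, hFr, hFdim, hFe⟩ := exists_flag_of_isNilpotent he hCe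
  rw [hCdim] at hFr hFdim
  refine ⟨F, hF0, fun i _ => hFmono i.le_succ, hFdim, fun i hi => hCiso.mono (hFr ▸ hFmono hi),
    ?_, fun v hv => ?_⟩
  · rintro (_ | i) hi -
    · omega
    · exact hFe i
  · rw [hFr] at hv ⊢
    exact LinearMap.apply_mem_map_sup_of_forall_apply_eq_zero hB hnd hskew hsup hUe hU'e hUiso
      hU'iso hperp hL hLe hv
end

section
/- Let $V$ be a complex vector space of dimension $2\ell + 1$ equipped with a nondegenerate symmetric bilinear form $B$, and let $e$ be a nilpotent endomorphism of $V$ satisfying $B(e x, y) = -B(x, e y)$ for all $x, y \in V$. Suppose $V = U \oplus U' \oplus U''$, where: $U$ and $U'$ are $e$-invariant totally isotropic subspaces of dimension $\ell - m$ (for some $0 \le m \le \ell$); $U''$ is an $e$-invariant subspace of dimension $2m + 1$ with $\ker(e|_{U''})$ one-dimensional; and $B(u'', w) = 0$ for all $u'' \in U''$ and $w \in U \oplus U'$. Let $U''' = e^{m+1}(U'')$ and set $T = e(U) \oplus U'''$. Then $T^{\perp} = U \oplus \ker(e|_{U'}) \oplus (e^{-1}(U''') \cap U'')$ and $e(T^{\perp})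 = T$, where $T^{\perp} = \{v \in V : B(v, t) = 0 \text{ for all } t \in T\}$ and $e^{-1}(U''') = \{v \in V : e(v) \in U'''\}$. -/
/-!
Write `v = a + b + c` along `V = U ⊕ U' ⊕ U''`. As `U` and `U'` are isotropic, `U''` is orthogonal
to `U ⊕ U'` and `e` is skew, `v ⊥ e(U)` says `e b ⊥ U`, which forces `e b = 0` because `U` pairs
perfectly with `U'`; and `v ⊥ e^{m+1}(U'')` says `e^{m+1} c ⊥ U''`, which forces `e^{m+1} c = 0`
because `U''` is nondegenerate. On `U''` the nilpotent `e` has a one-dimensional kernel, so it is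
a single Jordan block of size `2m + 1` and `U'' ∩ ker e^k = e^{2m+1-k}(U'')`. For `k = m + 1`
this is `e^m(U'') = e⁻¹(U''') ∩ U''`, and its image under `e` is `U'''`.
-/

open Module Submodule LinearMap

section JordanBlock

variable {K W : Type*} [Field K] [AddCommGroup W] [Module K W] [FiniteDimensional K W]

theorem LinearMap.IsNilpotent.pow_finrank_eq_zero {f : End K W} (hf : IsNilpotent f) :
    f ^ finrank K W = 0 := by
  simpa [hf.charpoly_eq_X_pow_finrank] using f.aeval_self_charpoly

theorem Module.End.finrank_ker_pow_succ_le (f : End K W) (k : ℕ) :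
    finrank K (ker (f ^ (k + 1))) ≤ finrank K (ker (f ^ k)) + finrank K (ker f) := by
  have h := LinearMap.lift_rank_comap_le (f := f) (ker (f ^ k))
  rw [← ker_comp, ← Module.End.mul_eq_comp, ← pow_succ] at h
  simp only [Cardinal.lift_id, ← finrank_eq_rank] at h
  exact_mod_cast h

theorem Module.End.finrank_ker_pow_of_finrank_ker_eq_one {f : End K W} (hf : IsNilpotent f)
    (h1 : finrank K (ker f) = 1) {k : ℕ} (hk : k ≤ finrank K W) :
    finrank K (ker (f ^ k)) = k := by
  have growth (i j : ℕ) : finrank K (ker (f ^ (i + j))) ≤ finrank K (ker (f ^ i)) + j := by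
    induction j with
    | zero => simp
    | succ j ih => have := f.finrank_ker_pow_succ_le (i + j); rw [← add_assoc]; omega
  have hn : finrank K (ker (f ^ finrank K W)) = finrank K W := by
    rw [hf.pow_finrank_eq_zero, ker_zero, finrank_top]
  have hup := growth 0 k
  rw [zero_add, pow_zero, Module.End.one_eq_id, ker_id, finrank_bot] at hup
  have hlow := growth k (finrank K W - k)
  rw [Nat.add_sub_cancel' hk, hn] at hlow
  omega

theorem Module.End.ker_pow_eq_range_pow_of_finrank_ker_eq_one {f : End K W} (hf : IsNilpotent f)
    (h1 : finrank K (ker f) = 1) {k : ℕ} (hk : k ≤ finrank K W) :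
    ker (f ^ k) = range (f ^ (finrank K W - k)) := by
  refine (eq_of_le_of_finrank_eq ?_ ?_).symm
  · rintro _ ⟨x, rfl⟩
    rw [mem_ker, ← Module.End.mul_apply, ← pow_add, Nat.add_sub_cancel' hk,
      hf.pow_finrank_eq_zero, LinearMap.zero_apply]
  · have := (f ^ (finrank K W - k)).finrank_range_add_finrank_ker
    rw [finrank_ker_pow_of_finrank_ker_eq_one hf h1 hk,
      finrank_ker_pow_of_finrank_ker_eq_one hf h1 (Nat.sub_le _ _)] at *
    omega

end JordanBlock

section InvariantSubspace

variable {K V : Type*} [Field K] [AddCommGroup V] [Module K V] {e : End K V} {W : Submodule K V}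
  [FiniteDimensional K W]

theorem Submodule.inf_ker_pow_eq_map_pow (hW : map e W ≤ W) (he : IsNilpotent e)
    (h1 : finrank K ↥(W ⊓ ker e) = 1) {k : ℕ} (hk : k ≤ finrank K W) :
    W ⊓ ker (e ^ k) = map (e ^ (finrank K W - k)) W := by
  have hmaps : ∀ x ∈ W, e x ∈ W := fun x hx => hW (mem_map_of_mem hx)
  have hf1 : finrank K (ker (e.restrict hmaps)) = 1 := by
    rwa [ker_restrict, ← finrank_map_subtype_eq, map_comap_subtype]
  have h := congr_arg (map W.subtype) (Module.End.ker_pow_eq_range_pow_of_finrank_ker_eq_one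
    (Module.End.isNilpotent.restrict hmaps he) hf1 hk)
  rwa [Module.End.pow_restrict, Module.End.pow_restrict, ker_restrict, map_comap_subtype,
    range_restrict, map_comap_subtype, inf_of_le_right (map_le_iff_le_comap.2 fun x hx =>
      Module.End.pow_apply_mem_of_forall_mem _ hmaps x hx)] at h

theorem Submodule.comap_map_pow_succ_inf_eq_map_pow (hW : map e W ≤ W) (he : IsNilpotent e)
    (h1 : finrank K ↥(W ⊓ ker e) = 1) {j : ℕ} (hj : j < finrank K W) :
    comap e (map (e ^ (j + 1)) W) ⊓ W = map (e ^ j) W := by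
  set n := finrank K W
  have hkill : W ≤ ker (e ^ n) := by
    have h := inf_ker_pow_eq_map_pow hW he h1 le_rfl
    rwa [Nat.sub_self, pow_zero, Module.End.one_eq_id, map_id, inf_eq_left] at h
  have hJ : W ⊓ ker (e ^ (n - j)) = map (e ^ j) W := by
    rw [inf_ker_pow_eq_map_pow hW he h1 (Nat.sub_le n j), Nat.sub_sub_self hj.le]
  apply le_antisymm
  · rintro c ⟨⟨w, hw, hwc⟩, hc⟩
    refine hJ ▸ ⟨hc, ?_⟩
    calc (e ^ (n - j)) c = (e ^ (n - j - 1)) (e c) := by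
          rw [← Module.End.mul_apply, ← pow_succ, Nat.sub_add_cancel (by omega)]
      _ = (e ^ n) w := by
          rw [← hwc, ← Module.End.mul_apply, ← pow_add, Nat.sub_sub, Nat.sub_add_cancel hj]
      _ = 0 := hkill hw
  · rintro _ ⟨w, hw, rfl⟩
    refine ⟨⟨w, hw, by rw [pow_succ', Module.End.mul_apply]⟩, ?_⟩
    exact (hJ ▸ inf_le_left : map (e ^ j) W ≤ W) (mem_map_of_mem hw)

end InvariantSubspace

section SkewAdjoint

variable {R M : Type*} [CommRing R] [AddCommGroup M] [Module R M]
  {B : LinearMap.BilinForm R M} {e : End R M}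

theorem LinearMap.IsSkewAdjoint.apply_pow_eq (he : B.IsSkewAdjoint e) (k : ℕ) (x y : M) :
    B x ((e ^ k) y) = (-1) ^ k * B ((e ^ k) x) y := by
  induction k generalizing y with
  | zero => simp
  | succ k ih =>
    have hswap : B ((e ^ k) x) (e y) = -B (e ((e ^ k) x)) y := by
      rw [he, Pi.neg_apply, map_neg, neg_neg]
    calc B x ((e ^ (k + 1)) y) = (-1) ^ k * B ((e ^ k) x) (e y) := by
          rw [pow_succ, Module.End.mul_apply, ih]
      _ = (-1) ^ (k + 1) * B ((e ^ (k + 1)) x) y := by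
          rw [hswap, ← Module.End.mul_apply, ← pow_succ']
          ring

theorem LinearMap.SeparatingLeft.eq_zero_of_le_ker {p q : Submodule R M} (hB : B.SeparatingLeft)
    (hpq : p ⊔ q = ⊤) {z : M} (hp : p ≤ ker (B z)) (hq : q ≤ ker (B z)) : z = 0 :=
  hB z fun y => sup_le hp hq (hpq ▸ mem_top : y ∈ p ⊔ q)

variable {U U' U'' : Submodule R M}

theorem add_add_mem_orthogonalBilin_flip_iff (hB : B.SeparatingLeft) (hrefl : B.IsRefl)
    (he : B.IsSkewAdjoint e) (hsup : U ⊔ U' ⊔ U'' = ⊤)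
    (hUe : map e U ≤ U) (hU'e : map e U' ≤ U') (hU''e : map e U'' ≤ U'')
    (hUiso : ∀ x ∈ U, ∀ y ∈ U, B x y = 0) (hU'iso : ∀ x ∈ U', ∀ y ∈ U', B x y = 0)
    (hperp : ∀ x ∈ U'', ∀ w ∈ U ⊔ U', B x w = 0) (k : ℕ) {a b c : M}
    (ha : a ∈ U) (hb : b ∈ U') (hc : c ∈ U'') :
    a + b + c ∈ (map e U ⊔ map (e ^ k) U'').orthogonalBilin B.flip ↔
      e b = 0 ∧ (e ^ k) c = 0 := by
  have hpow : ∀ x ∈ U'', (e ^ k) x ∈ U'' :=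
    Module.End.pow_apply_mem_of_forall_mem k fun x hx => hU''e (mem_map_of_mem hx)
  have heb : e b ∈ U' := hU'e (mem_map_of_mem hb)
  have hpairU : ∀ u ∈ U, B (a + b + c) (e u) = -B (e b) u := fun u hu => by
    have heu : e u ∈ U := hUe (mem_map_of_mem hu)
    rw [map_add, map_add, LinearMap.add_apply, LinearMap.add_apply, hUiso a ha _ heu,
      hperp c hc _ (mem_sup_left heu), he, Pi.neg_apply, map_neg]
    simp
  have hpairU'' : ∀ x ∈ U'', B (a + b + c) ((e ^ k) x) = (-1) ^ k * B ((e ^ k) c) x :=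
    fun x hx => by
    rw [map_add, map_add, LinearMap.add_apply, LinearMap.add_apply, he.apply_pow_eq k c x,
      hrefl _ _ (hperp _ (hpow x hx) a (mem_sup_left ha)),
      hrefl _ _ (hperp _ (hpow x hx) b (mem_sup_right hb)), zero_add, zero_add]
  change map e U ⊔ map (e ^ k) U'' ≤ ker (B (a + b + c)) ↔ _
  rw [sup_le_iff, map_le_iff_le_comap, map_le_iff_le_comap]
  simp only [SetLike.le_def, mem_comap, mem_ker]
  constructor
  · rintro ⟨hU, hU''⟩
    refine ⟨hB.eq_zero_of_le_ker hsup (sup_le ?_ ?_) ?_, hB.eq_zero_of_le_ker hsup ?_ ?_⟩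
    · exact fun u hu => neg_eq_zero.1 ((hpairU u hu).symm.trans (hU hu))
    · exact fun y hy => hU'iso _ heb y hy
    · exact fun y hy => hrefl _ _ (hperp y hy _ (mem_sup_right heb))
    · exact fun y hy => hperp _ (hpow c hc) y hy
    · exact fun x hx => neg_one_pow_mul_eq_zero_iff.1 ((hpairU'' x hx).symm.trans (hU'' hx))
  · rintro ⟨hb0, hc0⟩
    exact ⟨fun u hu => (hpairU u hu).trans (by simp [hb0]),
      fun x hx => (hpairU'' x hx).trans (by simp [hc0])⟩


theorem orthogonalBilin_flip_map_sup_map_pow_eq (hB : B.SeparatingLeft) (hrefl : B.IsRefl)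
    (he : B.IsSkewAdjoint e) (hsup : U ⊔ U' ⊔ U'' = ⊤)
    (hUe : map e U ≤ U) (hU'e : map e U' ≤ U') (hU''e : map e U'' ≤ U'')
    (hUiso : ∀ x ∈ U, ∀ y ∈ U, B x y = 0) (hU'iso : ∀ x ∈ U', ∀ y ∈ U', B x y = 0)
    (hperp : ∀ x ∈ U'', ∀ w ∈ U ⊔ U', B x w = 0) (k : ℕ) :
    (map e U ⊔ map (e ^ k) U'').orthogonalBilin B.flip =
      U ⊔ (U' ⊓ ker e) ⊔ (U'' ⊓ ker (e ^ k)) := by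
  have hmem {a b c : M} (ha : a ∈ U) (hb : b ∈ U') (hc : c ∈ U'') :=
    add_add_mem_orthogonalBilin_flip_iff hB hrefl he hsup hUe hU'e hU''e hUiso hU'iso hperp k
      ha hb hc
  apply le_antisymm
  · intro v hv
    obtain ⟨_, hab, c, hc, rfl⟩ := mem_sup.1 (hsup ▸ mem_top : v ∈ U ⊔ U' ⊔ U'')
    obtain ⟨a, ha, b, hb, rfl⟩ := mem_sup.1 hab
    obtain ⟨hb0, hc0⟩ := (hmem ha hb hc).1 hv
    exact add_mem (add_mem (mem_sup_left (mem_sup_left ha))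
      (mem_sup_left (mem_sup_right ⟨hb, hb0⟩))) (mem_sup_right ⟨hc, hc0⟩)
  · refine sup_le (sup_le (fun a ha => ?_) ?_) ?_
    · simpa using (hmem ha U'.zero_mem U''.zero_mem).2 (by simp)
    · rintro b ⟨hb, hb0⟩
      simpa using (hmem U.zero_mem hb U''.zero_mem).2 ⟨hb0, by simp⟩
    · rintro c ⟨hc, hc0⟩
      simpa using (hmem U.zero_mem U'.zero_mem hc).2 ⟨by simp, hc0⟩

end SkewAdjoint

theorem perp_of_typeB_flag_building_subspace_general
    {V : Type*} [AddCommGroup V] [Module ℂ V]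
    {m : ℕ}
    (B : V →ₗ[ℂ] V →ₗ[ℂ] ℂ)
    (hsymm : ∀ x y : V, B x y = B y x)
    (hnd : ∀ x : V, (∀ y : V, B x y = 0) → x = 0)
    (e : V →ₗ[ℂ] V) (he : IsNilpotent e)
    (hskew : ∀ x y : V, B (e x) y = - B x (e y))
    (U U' U'' : Submodule ℂ V)
    (hsup : U ⊔ U' ⊔ U'' = ⊤)
    (hU'' : Module.finrank ℂ U'' = 2 * m + 1)
    (hUe : Submodule.map e U ≤ U) (hU'e : Submodule.map e U' ≤ U')
    (hU''e : Submodule.map e U'' ≤ U'')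
    (hUiso : ∀ x ∈ U, ∀ y ∈ U, B x y = 0)
    (hU'iso : ∀ x ∈ U', ∀ y ∈ U', B x y = 0)
    (hJordan : Module.finrank ℂ (U'' ⊓ LinearMap.ker e : Submodule ℂ V) = 1)
    (hperp : ∀ x ∈ U'', ∀ w ∈ U ⊔ U', B x w = 0)
    (U''' : Submodule ℂ V) (hU''' : U''' = Submodule.map (e ^ (m + 1)) U'')
    (T : Submodule ℂ V) (hT : T = Submodule.map e U ⊔ U''')
    (Tperp : Submodule ℂ V)
    (hTperp : ∀ v : V, v ∈ Tperp ↔ ∀ t ∈ T, B v t = 0) :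
    Tperp = U ⊔ (U' ⊓ LinearMap.ker e) ⊔ (Submodule.comap e U''' ⊓ U'') ∧
      Submodule.map e Tperp = T := by
  have : FiniteDimensional ℂ U'' := Module.finite_of_finrank_pos (by omega)
  have hskewAdjoint : B.IsSkewAdjoint e := fun x y => by rw [hskew, Pi.neg_apply, map_neg]
  have hrefl : B.IsRefl := fun x y h => (hsymm y x).trans h
  have hTperp_eq : Tperp = U ⊔ (U' ⊓ ker e) ⊔ (U'' ⊓ ker (e ^ (m + 1))) := by
    rw [← orthogonalBilin_flip_map_sup_map_pow_eq hnd hrefl hskewAdjoint hsup hUe hU'e hU''e hUiso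
      hU'iso hperp, ← hU''', ← hT]
    exact ext hTperp
  have hker : U'' ⊓ ker (e ^ (m + 1)) = map (e ^ m) U'' := by
    rw [inf_ker_pow_eq_map_pow hU''e he hJordan (by omega), hU'',
      show 2 * m + 1 - (m + 1) = m by omega]
  constructor
  · rw [hTperp_eq, hker, hU''', comap_map_pow_succ_inf_eq_map_pow hU''e he hJordan (by omega)]
  · rw [hTperp_eq, hker, Submodule.map_sup, Submodule.map_sup, hT, hU''', ← map_comp,
      ← Module.End.mul_eq_comp, ← pow_succ', le_ker_iff_map.1 inf_le_right, sup_bot_eq]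

/-- type B, perpendicular computation: In the setting of the type-B
decomposition `V = U ⊕ U' ⊕ U''`, with `U''' = e^{m+1}(U'')` and
`T = e(U) ⊕ U'''`, one has
`T^⊥ = U ⊕ ker (e|_{U'}) ⊕ (e⁻¹(U''') ∩ U'')` and `e (T^⊥) = T`. -/
theorem perp_of_typeB_flag_building_subspace
    {V : Type*} [AddCommGroup V] [Module ℂ V] [FiniteDimensional ℂ V]
    {ℓ m : ℕ} (hm : m ≤ ℓ) (hdim : Module.finrank ℂ V = 2 * ℓ + 1)
    (B : V →ₗ[ℂ] V →ₗ[ℂ] ℂ)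
    (hsymm : ∀ x y : V, B x y = B y x)
    (hnd : ∀ x : V, (∀ y : V, B x y = 0) → x = 0)
    (e : V →ₗ[ℂ] V) (he : IsNilpotent e)
    (hskew : ∀ x y : V, B (e x) y = - B x (e y))
    (U U' U'' : Submodule ℂ V)
    (hsup : U ⊔ U' ⊔ U'' = ⊤)
    (hU : Module.finrank ℂ U = ℓ - m) (hU' : Module.finrank ℂ U' = ℓ - m)
    (hU'' : Module.finrank ℂ U'' = 2 * m + 1)
    (hUe : Submodule.map e U ≤ U) (hU'e : Submodule.map e U' ≤ U')
    (hU''e : Submodule.map e U'' ≤ U'')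
    (hUiso : ∀ x ∈ U, ∀ y ∈ U, B x y = 0)
    (hU'iso : ∀ x ∈ U', ∀ y ∈ U', B x y = 0)
    (hJordan : Module.finrank ℂ (U'' ⊓ LinearMap.ker e : Submodule ℂ V) = 1)
    (hperp : ∀ x ∈ U'', ∀ w ∈ U ⊔ U', B x w = 0)
    (U''' : Submodule ℂ V) (hU''' : U''' = Submodule.map (e ^ (m + 1)) U'')
    (T : Submodule ℂ V) (hT : T = Submodule.map e U ⊔ U''')
    (Tperp : Submodule ℂ V)
    (hTperp : ∀ v : V, v ∈ Tperp ↔ ∀ t ∈ T, B v t = 0) :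
    Tperp = U ⊔ (U' ⊓ LinearMap.ker e) ⊔ (Submodule.comap e U''' ⊓ U'') ∧
      Submodule.map e Tperp = T :=
  perp_of_typeB_flag_building_subspace_general B hsymm hnd e he hskew U U' U'' hsup hU'' hUe hU'e
    hU''e hUiso hU'iso hJordan hperp U''' hU''' T hT Tperp hTperp
end
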